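/- arXiv:2403.13875 — 8 statements merged into one kernel-verified Lean document; each statement's English description precedes it below -/
import Mathlib

section
/- Let G=(V,E) be a digraph with V nonempty and finite. Then the root R(G) is the smallest subset S ⊆ V satisfying: (i) for every v ∈ V there exists w ∈ S and a walk from w to v in G; and (ii) if v ∈ S and (w,v) ∈ E for some w ∈ V, then w ∈ S. That is, R(G) satisfies (i) and (ii), and every subset S ⊆ V satisfying (i) and (ii) contains R(G). -/
/-- There is a walk of length exactly `n` from `v` to `w` in the digraph with edge relation `E`. -/
def HasWalkOfLength {V : Type*} (E : V → V → Prop) (v w : V) (n : ℕ) : Prop :=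
  ∃ f : ℕ → V, f 0 = v ∧ f n = w ∧ ∀ i < n, E (f i) (f (i + 1))

/-- `v ⇝ w` : there is a walk (of some length, possibly `0`) from `v` to `w`. -/
def Reaches {V : Type*} (E : V → V → Prop) : V → V → Prop :=
  Relation.ReflTransGen E

/-- The equivalence relation whose classes are the strongly connected components:
`v ∼ w` iff there are walks from `v` to `w` and from `w` to `v`. -/
def SCCSetoid {V : Type*} (E : V → V → Prop) : Setoid V where
  r v w := Reaches E v w ∧ Reaches E w v
  iseqv := ⟨fun _ => ⟨Relation.ReflTransGen.refl, Relation.ReflTransGen.refl⟩,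
    fun h => ⟨h.2, h.1⟩,
    fun h h' => ⟨Relation.ReflTransGen.trans h.1 h'.1, Relation.ReflTransGen.trans h'.2 h.2⟩⟩

/-- The edge relation of the quotient digraph `G^SCC` of strongly connected components :
`(P, Q)` is an edge iff `P ≠ Q` and there is an edge `(a, b) ∈ E` with `a ∈ P`, `b ∈ Q`. -/
def SCCEdge {V : Type*} (E : V → V → Prop) (P Q : Quotient (SCCSetoid E)) : Prop :=
  P ≠ Q ∧ ∃ a b : V, Quotient.mk (SCCSetoid E) a = P ∧ Quotient.mk (SCCSetoid E) b = Q ∧ E a b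

/-- The root `R(G)`: the union of the strongly connected components having no
incoming edge in `G^SCC` (i.e. lying in the source of `G^SCC`). -/
def Root {V : Type*} (E : V → V → Prop) : Set V :=
  {v | ∀ P, ¬ SCCEdge E P (Quotient.mk (SCCSetoid E) v)}

/-- `f` restricted to `{0,…,n}` is a cycle: a nonempty walk in which only the first and
last vertices are equal. -/
def IsCycle {V : Type*} (E : V → V → Prop) (f : ℕ → V) (n : ℕ) : Prop :=
  0 < n ∧ (∀ i < n, E (f i) (f (i + 1))) ∧ f 0 = f n ∧
    ∀ i j, i < j → j ≤ n → f i = f j → i = 0 ∧ j = n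

/-- A digraph is aperiodic if no integer `k > 1` divides the length of every cycle. -/
def IsAperiodic {V : Type*} (E : V → V → Prop) : Prop :=
  ¬ ∃ k : ℕ, 1 < k ∧ ∀ (f : ℕ → V) (n : ℕ), IsCycle E f n → k ∣ n

/-- A digraph is ergodic if it is nonempty, irreducible and aperiodic. -/
def IsErgodic {V : Type*} (E : V → V → Prop) : Prop :=
  Nonempty V ∧ (∀ v w : V, Reaches E v w) ∧ IsAperiodic E

/-! A vertex lies in the root exactly when every vertex reaching it is reached back from it,
i.e. its strongly connected component has no ancestors outside itself. Since the strict part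
of reachability is well founded on a finite vertex set, every vertex has a minimal ancestor,
which lies in the root; and a set closed under predecessors that reaches every vertex must
contain each root vertex, because it contains one of its ancestors, which the root vertex
reaches back. -/

open Relation

section

variable {V : Type*} {E : V → V → Prop}

theorem mem_root_iff {v : V} : v ∈ Root E ↔ ∀ w, Reaches E w v → Reaches E v w := by
  constructor
  · intro hv w hwv
    induction hwv using ReflTransGen.head_induction_on with
    | refl => exact ReflTransGen.refl
    | @head u x hux hxv ih =>
      have huv : Quotient.mk (SCCSetoid E) u = Quotient.mk (SCCSetoid E) v :=
        by_contra fun hne => hv _ ⟨hne, u, x, rfl, Quotient.sound ⟨hxv, ih⟩, hux⟩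
      exact (Quotient.exact huv).2
  · rintro hv P ⟨hne, a, b, rfl, hb, hab⟩
    have hav : Reaches E a v := ReflTransGen.head hab (Quotient.exact hb).1
    exact hne (Quotient.sound ⟨hav, hv a hav⟩)

theorem mem_root_of_edge {v w : V} (hv : v ∈ Root E) (hwv : E w v) : w ∈ Root E := by
  rw [mem_root_iff] at hv ⊢
  exact fun u huw => (ReflTransGen.single hwv).trans (hv u (huw.tail hwv))

theorem wellFounded_reaches_and_not_reaches [Finite V] :
    WellFounded (fun u w => Reaches E u w ∧ ¬ Reaches E w u) := by
  have : IsTrans V (fun u w => Reaches E u w ∧ ¬ Reaches E w u) :=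
    ⟨fun _ _ _ hab hbc => ⟨hab.1.trans hbc.1, fun hca => hbc.2 (hca.trans hab.1)⟩⟩
  have : Std.Irrefl (fun u w => Reaches E u w ∧ ¬ Reaches E w u) := ⟨fun _ h => h.2 h.1⟩
  exact Finite.wellFounded_of_trans_of_irrefl _

theorem exists_mem_root_reaches [Finite V] (v : V) : ∃ w ∈ Root E, Reaches E w v := by
  obtain ⟨w, hwv, hmin⟩ := wellFounded_reaches_and_not_reaches.has_min
    {u | Reaches E u v} ⟨v, ReflTransGen.refl⟩
  refine ⟨w, mem_root_iff.2 fun u huw => ?_, hwv⟩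
  by_contra hwu
  exact hmin u (huw.trans hwv) ⟨huw, hwu⟩

theorem mem_of_reaches_of_mem {S : Set V} (hS : ∀ v ∈ S, ∀ w, E w v → w ∈ S) {u w : V}
    (huw : Reaches E u w) (hw : w ∈ S) : u ∈ S := by
  induction huw using ReflTransGen.head_induction_on with
  | refl => exact hw
  | head hux _ ih => exact hS _ ih _ hux

theorem root_subset_of_reaches_of_closed {S : Set V} (hreach : ∀ v, ∃ w ∈ S, Reaches E w v)
    (hS : ∀ v ∈ S, ∀ w, E w v → w ∈ S) : Root E ⊆ S := by
  intro v hv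
  obtain ⟨w, hwS, hwv⟩ := hreach v
  exact mem_of_reaches_of_mem hS (mem_root_iff.1 hv w hwv) hwS

end

theorem stmt_1_general {V : Type*} [Fintype V] (E : V → V → Prop) :
    (∀ v : V, ∃ w ∈ Root E, Reaches E w v) ∧
    (∀ v ∈ Root E, ∀ w : V, E w v → w ∈ Root E) ∧
    (∀ S : Set V, (∀ v : V, ∃ w ∈ S, Reaches E w v) →
      (∀ v ∈ S, ∀ w : V, E w v → w ∈ S) → Root E ⊆ S) :=
  ⟨exists_mem_root_reaches, fun _ hv _ hwv => mem_root_of_edge hv hwv,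
    fun _ hreach hS => root_subset_of_reaches_of_closed hreach hS⟩

/-- Characterization theorem of the root: for a digraph `G = (V, E)` with `V` nonempty and
finite, `R(G)` is the smallest subset `S ⊆ V` such that (i) every vertex of `V` is reachable
by a walk from some element of `S`, and (ii) `S` is closed under taking tails of edges
ending in `S`. -/
theorem stmt_1 {V : Type*} [Fintype V] [Nonempty V] (E : V → V → Prop) :
    (∀ v : V, ∃ w ∈ Root E, Reaches E w v) ∧
    (∀ v ∈ Root E, ∀ w : V, E w v → w ∈ Root E) ∧
    (∀ S : Set V, (∀ v : V, ∃ w ∈ S, Reaches E w v) →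
      (∀ v ∈ S, ∀ w : V, E w v → w ∈ S) → Root E ⊆ S) :=
  stmt_1_general E
end

section
/- Let G=(V,E) be a digraph with V finite and nonempty, and let 𝓡(G) denote the subgraph of G induced by the root R(G). Then 𝓡(G) is irreducible (for every pair of vertices of R(G) there is a walk between them staying inside R(G)) if and only if the source of G^SCC is a singleton. -/
/-! A finite digraph has a vertex `m` that is minimal for reachability (every `x ⇝ m` also
satisfies `m ⇝ x`), and its component is a source of `G^SCC`; so the source is never empty.
The root is a union of strongly connected components, hence a walk between two vertices of the
same component never leaves the root. So the root graph is irreducible exactly when all root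
vertices lie in one component. -/

section Root

variable {V : Type*} {E : V → V → Prop}

lemma Reaches.of_restrict {S : Set V} {a b : S} (h : Reaches (fun x y : S => E x y) a b) :
    Reaches E a b :=
  Relation.ReflTransGen.lift Subtype.val (fun _ _ h => h) _ _ h

lemma Reaches.restrict_of_saturated {S : Set V}
    (hS : ∀ x y, (SCCSetoid E).r x y → x ∈ S → y ∈ S) {a b : V} (hab : Reaches E a b)
    (hba : Reaches E b a) (ha : a ∈ S) (hb : b ∈ S) :
    Reaches (fun x y : S => E x y) ⟨a, ha⟩ ⟨b, hb⟩ := by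
  induction hab using Relation.ReflTransGen.head_induction_on with
  | refl => exact Relation.ReflTransGen.refl
  | @head a c hac hcb ih =>
    have hc : c ∈ S := hS a c ⟨.single hac, hcb.trans hba⟩ ha
    exact .head (show E a c from hac) (ih (hba.tail hac) hc)

lemma mem_root_of_sccSetoid {a c : V} (h : (SCCSetoid E).r a c) (ha : a ∈ Root E) :
    c ∈ Root E := by
  intro P
  rw [← Quotient.sound h]
  exact ha P

lemma mem_root_of_minimal {m : V} (hm : ∀ x, Reaches E x m → Reaches E m x) :
    m ∈ Root E := by
  rintro P ⟨hne, a, b, rfl, hb, hab⟩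
  have ham : Reaches E a m := (Relation.ReflTransGen.single hab).trans (Quotient.exact hb).1
  exact hne (Quotient.sound (show (SCCSetoid E).r a m from ⟨ham, hm a ham⟩))

variable (E)

lemma exists_minimal_reaches [Finite V] [Nonempty V] :
    ∃ m, ∀ x, Reaches E x m → Reaches E m x := by
  let lt : V → V → Prop := fun x y => Reaches E x y ∧ ¬ Reaches E y x
  have : IsTrans V lt :=
    ⟨fun _ _ _ ⟨hxy, _⟩ ⟨hyz, hzy⟩ => ⟨hxy.trans hyz, fun hzx => hzy (hzx.trans hxy)⟩⟩
  have : Std.Irrefl lt := ⟨fun _ h => h.2 h.1⟩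
  obtain ⟨m, -, hm⟩ :=
    (Finite.wellFounded_of_trans_of_irrefl lt).has_min Set.univ ⟨Classical.arbitrary V, trivial⟩
  exact ⟨m, fun x hx => by_contra fun hmx => hm x trivial ⟨hx, hmx⟩⟩

lemma exists_source_scc [Finite V] [Nonempty V] :
    ∃ P : Quotient (SCCSetoid E), ∀ Q, ¬ SCCEdge E Q P :=
  let ⟨m, hm⟩ := exists_minimal_reaches E
  ⟨Quotient.mk _ m, mem_root_of_minimal hm⟩

end Root

/-- For a digraph `G = (V, E)` with `V` finite and nonempty, the root graph `𝓡(G)`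
(the subgraph induced by `R(G)`) is irreducible — i.e. any two of its vertices are joined
by a walk staying inside `R(G)` — if and only if the source of `G^SCC` is a singleton. -/
theorem stmt_9 {V : Type*} [Fintype V] [Nonempty V] (E : V → V → Prop) :
    (∀ a b : (Root E : Set V), Reaches (fun x y : (Root E : Set V) => E x y) a b) ↔
      (∃! P : Quotient (SCCSetoid E), ∀ Q, ¬ SCCEdge E Q P) := by
  constructor
  · intro hirr
    obtain ⟨P, hP⟩ := exists_source_scc E
    refine ⟨P, hP, fun Q hQ => ?_⟩
    induction P, Q using Quotient.inductionOn₂ with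
    | _ p q =>
      exact Quotient.sound ⟨(hirr ⟨q, hQ⟩ ⟨p, hP⟩).of_restrict, (hirr ⟨p, hP⟩ ⟨q, hQ⟩).of_restrict⟩
  · rintro ⟨P, -, huniq⟩ ⟨a, ha⟩ ⟨b, hb⟩
    have hab : (SCCSetoid E).r a b := Quotient.exact ((huniq _ ha).trans (huniq _ hb).symm)
    exact hab.1.restrict_of_saturated (fun _ _ => mem_root_of_sccSetoid) hab.2 ha hb
end

section
/- Let I ⊆ ℝ be an interval, p ∈ ℕ, let 𝐌 : Iᵖ → Iᵖ be a mean-type mapping, and let K : Iᵖ → I be a mean. Then K is the unique 𝐌-invariant mean (i.e., K ∘ 𝐌 = K, and every mean L : Iᵖ → I with L ∘ 𝐌 = L equals K) if and only if the sequence of iterates (𝐌ⁿ)_{n∈ℕ} converges pointwise on Iᵖ to the mapping 𝐊 := (K,…,K). -/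
/-- `M` is a mean on the interval `I ⊆ ℝ` (indexed by the finite index type `ι`):
`min x ≤ M x ≤ max x` for every `x : ι → I`. -/
def IsMeanOn (I : Set ℝ) {ι : Type*} [Fintype ι] (M : (ι → I) → I) : Prop :=
  ∀ (x : ι → I) (h : (Finset.univ : Finset ι).Nonempty),
    Finset.univ.inf' h (fun i => (x i : ℝ)) ≤ (M x : ℝ) ∧
      (M x : ℝ) ≤ Finset.univ.sup' h (fun i => (x i : ℝ))

/-- `M` is a strict mean on `I`: it is a mean, and `min x < M x < max x`
whenever `x` is nonconstant. -/
def IsStrictMeanOn (I : Set ℝ) {ι : Type*} [Fintype ι] (M : (ι → I) → I) : Prop :=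
  IsMeanOn I M ∧ ∀ (x : ι → I) (h : (Finset.univ : Finset ι).Nonempty),
    (∃ i j, x i ≠ x j) →
      Finset.univ.inf' h (fun i => (x i : ℝ)) < (M x : ℝ) ∧
        (M x : ℝ) < Finset.univ.sup' h (fun i => (x i : ℝ))

/-- The mean-type mapping `𝐌_α : Iᵖ → Iᵖ`, whose `i`-th coordinate is
`Mᵢ(x_{α_{i,1}}, …, x_{α_{i,dᵢ}})`. -/
def MeanTypeMap {I : Set ℝ} {p : ℕ} (d : Fin p → ℕ) (M : ∀ i, (Fin (d i) → I) → I)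
    (α : ∀ i, Fin (d i) → Fin p) : (Fin p → I) → (Fin p → I) :=
  fun x i => M i fun j => x (α i j)

/-- The edge relation of the α-incidence graph `G_α` on `{1,…,p}`:
edges are the pairs `(α_{i,j}, i)`. -/
def IncidenceE {p : ℕ} (d : Fin p → ℕ) (α : ∀ i, Fin (d i) → Fin p) :
    Fin p → Fin p → Prop :=
  fun a b => ∃ j : Fin (d b), α b j = a

/-- The sequence of suprema of coordinates of iterates. -/
noncomputable def sseq {I : Set ℝ} {p : ℕ} (hne : (Finset.univ : Finset (Fin p)).Nonempty)
    (M : (Fin p → I) → (Fin p → I)) (x : Fin p → I) (n : ℕ) : ℝ :=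
  Finset.univ.sup' hne (fun i => ((M^[n] x) i : ℝ))

/-- The sequence of infima of coordinates of iterates. -/
noncomputable def mseq {I : Set ℝ} {p : ℕ} (hne : (Finset.univ : Finset (Fin p)).Nonempty)
    (M : (Fin p → I) → (Fin p → I)) (x : Fin p → I) (n : ℕ) : ℝ :=
  Finset.univ.inf' hne (fun i => ((M^[n] x) i : ℝ))

/-- Invariance principle: for a mean-type mapping `𝐌 : Iᵖ → Iᵖ` and a mean `K : Iᵖ → I`,
`K` is the unique `𝐌`-invariant mean if and only if the iterates `𝐌ⁿ` converge
pointwise on `Iᵖ` to `𝐊 = (K, …, K)`. -/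
theorem stmt_10 {I : Set ℝ} (hI : I.OrdConnected) {p : ℕ} (hp : 0 < p)
    (M : (Fin p → I) → (Fin p → I)) (hM : ∀ i, IsMeanOn I (fun x => M x i))
    (K : (Fin p → I) → I) (hK : IsMeanOn I K) :
    ((∀ x, K (M x) = K x) ∧
        ∀ L : (Fin p → I) → I, IsMeanOn I L → (∀ x, L (M x) = L x) → L = K) ↔
      (∀ (x : Fin p → I) (i : Fin p),
        Filter.Tendsto (fun n => ((M^[n] x) i : ℝ)) Filter.atTop (nhds (K x))) := by
  have : Nonempty (Fin p) := ⟨⟨0, hp⟩⟩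
  have hne : (Finset.univ : Finset (Fin p)).Nonempty := Finset.univ_nonempty
  -- basic properties of sseq, mseq
  have hs_anti : ∀ x, Antitone (sseq hne M x) := by
    intro x
    refine antitone_nat_of_succ_le fun n => ?_
    refine Finset.sup'_le _ _ fun i _ => ?_
    have h1 : ((M^[n+1] x) i : ℝ) = ((M (M^[n] x)) i : ℝ) := by
      rw [Function.iterate_succ_apply']
    rw [h1]
    exact (hM i (M^[n] x) hne).2
  have hm_mono : ∀ x, Monotone (mseq hne M x) := by
    intro x
    refine monotone_nat_of_le_succ fun n => ?_
    refine Finset.le_inf' _ _ fun i _ => ?_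
    have h1 : ((M^[n+1] x) i : ℝ) = ((M (M^[n] x)) i : ℝ) := by
      rw [Function.iterate_succ_apply']
    rw [h1]
    exact (hM i (M^[n] x) hne).1
  have hms : ∀ x n, mseq hne M x n ≤ sseq hne M x n := by
    intro x n
    exact le_trans (Finset.inf'_le (fun j => ((M^[n] x) j : ℝ)) (Finset.mem_univ (⟨0, hp⟩ : Fin p)))
      (Finset.le_sup' (fun j => ((M^[n] x) j : ℝ)) (Finset.mem_univ (⟨0, hp⟩ : Fin p)))
  have hm_le_s : ∀ x n k, mseq hne M x n ≤ sseq hne M x k := by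
    intro x n k
    rcases le_total n k with h | h
    · exact (hm_mono x h).trans (hms x k)
    · exact (hms x n).trans (hs_anti x h)
  have hbddS : ∀ x, BddBelow (Set.range (sseq hne M x)) := by
    intro x
    exact ⟨mseq hne M x 0, by rintro y ⟨n, rfl⟩; exact hm_le_s x 0 n⟩
  have hbddM : ∀ x, BddAbove (Set.range (mseq hne M x)) := by
    intro x
    exact ⟨sseq hne M x 0, by rintro y ⟨n, rfl⟩; exact hm_le_s x n 0⟩
  have hs0 : ∀ x, sseq hne M x 0 = Finset.univ.sup' hne (fun i => (x i : ℝ)) := by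
    intro x; simp [sseq]
  have hm0 : ∀ x, mseq hne M x 0 = Finset.univ.inf' hne (fun i => (x i : ℝ)) := by
    intro x; simp [mseq]
  have hsshift : ∀ x n, sseq hne M (M x) n = sseq hne M x (n + 1) := by
    intro x n; simp [sseq, Function.iterate_succ_apply]
  have hmshift : ∀ x n, mseq hne M (M x) n = mseq hne M x (n + 1) := by
    intro x n; simp [mseq, Function.iterate_succ_apply]
  have hsT : ∀ x, Filter.Tendsto (sseq hne M x) Filter.atTop (nhds (⨅ n, sseq hne M x n)) :=
    fun x => tendsto_atTop_ciInf (hs_anti x) (hbddS x)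
  have hmT : ∀ x, Filter.Tendsto (mseq hne M x) Filter.atTop (nhds (⨆ n, mseq hne M x n)) :=
    fun x => tendsto_atTop_ciSup (hm_mono x) (hbddM x)
  constructor
  · rintro ⟨hinv, huniq⟩ x i
    -- the candidate invariant means given by limits of sseq and mseq
    have hLsI : ∀ y, (⨅ n, sseq hne M y n) ∈ I := by
      intro y
      obtain ⟨i0, -, hi0⟩ := Finset.exists_mem_eq_inf' hne (fun i => (y i : ℝ))
      obtain ⟨j0, -, hj0⟩ := Finset.exists_mem_eq_sup' hne (fun i => (y i : ℝ))
      refine hI.out (y i0).2 (y j0).2 ⟨?_, ?_⟩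
      · rw [← hi0, ← hm0 y]
        exact le_ciInf fun n => hm_le_s y 0 n
      · rw [← hj0, ← hs0 y]
        exact ciInf_le (hbddS y) 0
    have hLmI : ∀ y, (⨆ n, mseq hne M y n) ∈ I := by
      intro y
      obtain ⟨i0, -, hi0⟩ := Finset.exists_mem_eq_inf' hne (fun i => (y i : ℝ))
      obtain ⟨j0, -, hj0⟩ := Finset.exists_mem_eq_sup' hne (fun i => (y i : ℝ))
      refine hI.out (y i0).2 (y j0).2 ⟨?_, ?_⟩
      · rw [← hi0, ← hm0 y]
        exact le_ciSup (hbddM y) 0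
      · rw [← hj0, ← hs0 y]
        exact ciSup_le fun n => hm_le_s y n 0
    set Ls : (Fin p → I) → I := fun y => ⟨⨅ n, sseq hne M y n, hLsI y⟩ with hLs
    set Lm : (Fin p → I) → I := fun y => ⟨⨆ n, mseq hne M y n, hLmI y⟩ with hLm
    have hLsMean : IsMeanOn I Ls := by
      intro y h
      constructor
      · show Finset.univ.inf' h (fun i => (y i : ℝ)) ≤ ⨅ n, sseq hne M y n
        rw [← hm0 y]
        exact le_ciInf fun n => hm_le_s y 0 n
      · show (⨅ n, sseq hne M y n) ≤ Finset.univ.sup' h (fun i => (y i : ℝ))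
        rw [← hs0 y]
        exact ciInf_le (hbddS y) 0
    have hLmMean : IsMeanOn I Lm := by
      intro y h
      constructor
      · show Finset.univ.inf' h (fun i => (y i : ℝ)) ≤ ⨆ n, mseq hne M y n
        rw [← hm0 y]
        exact le_ciSup (hbddM y) 0
      · show (⨆ n, mseq hne M y n) ≤ Finset.univ.sup' h (fun i => (y i : ℝ))
        rw [← hs0 y]
        exact ciSup_le fun n => hm_le_s y n 0
    have hLsInv : ∀ y, Ls (M y) = Ls y := by
      intro y
      apply Subtype.ext
      show (⨅ n, sseq hne M (M y) n) = ⨅ n, sseq hne M y n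
      have hb' : BddBelow (Set.range fun n => sseq hne M y (n + 1)) :=
        ⟨mseq hne M y 0, by rintro z ⟨n, rfl⟩; exact hm_le_s y 0 (n + 1)⟩
      simp only [hsshift y]
      refine le_antisymm ?_ ?_
      · exact le_ciInf fun n => (ciInf_le hb' n).trans (hs_anti y n.le_succ)
      · exact le_ciInf fun n => ciInf_le (hbddS y) (n + 1)
    have hLmInv : ∀ y, Lm (M y) = Lm y := by
      intro y
      apply Subtype.ext
      show (⨆ n, mseq hne M (M y) n) = ⨆ n, mseq hne M y n
      have hb' : BddAbove (Set.range fun n => mseq hne M y (n + 1)) :=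
        ⟨sseq hne M y 0, by rintro z ⟨n, rfl⟩; exact hm_le_s y (n + 1) 0⟩
      simp only [hmshift y]
      refine le_antisymm ?_ ?_
      · exact ciSup_le fun n => le_ciSup (hbddM y) (n + 1)
      · exact ciSup_le fun n => (hm_mono y n.le_succ).trans (le_ciSup hb' n)
    have hLsK : Ls = K := huniq Ls hLsMean hLsInv
    have hLmK : Lm = K := huniq Lm hLmMean hLmInv
    have hsK : Filter.Tendsto (sseq hne M x) Filter.atTop (nhds (K x)) := by
      have h1 : ((K x : ℝ)) = ⨅ n, sseq hne M x n := by
        rw [← hLsK]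
      rw [h1]; exact hsT x
    have hmK : Filter.Tendsto (mseq hne M x) Filter.atTop (nhds (K x)) := by
      have h1 : ((K x : ℝ)) = ⨆ n, mseq hne M x n := by
        rw [← hLmK]
      rw [h1]; exact hmT x
    exact tendsto_of_tendsto_of_tendsto_of_le_of_le hmK hsK
      (fun n => Finset.inf'_le (fun j => ((M^[n] x) j : ℝ)) (Finset.mem_univ i))
      (fun n => Finset.le_sup' (fun j => ((M^[n] x) j : ℝ)) (Finset.mem_univ i))
  · intro htend
    constructor
    · -- invariance of K
      intro x
      apply Subtype.ext
      have h1 : Filter.Tendsto (fun n => ((M^[n] (M x)) ⟨0, hp⟩ : ℝ)) Filter.atTop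
          (nhds (K (M x))) := htend (M x) ⟨0, hp⟩
      have h2 : Filter.Tendsto (fun n => ((M^[n] (M x)) ⟨0, hp⟩ : ℝ)) Filter.atTop
          (nhds (K x)) := by
        have h3 : Filter.Tendsto (fun n => ((M^[n + 1] x) ⟨0, hp⟩ : ℝ)) Filter.atTop
            (nhds (K x)) := (htend x ⟨0, hp⟩).comp (Filter.tendsto_add_atTop_nat 1)
        simpa [Function.iterate_succ_apply] using h3
      exact tendsto_nhds_unique h1 h2
    · -- uniqueness
      intro L hL hLinv
      funext x
      apply Subtype.ext
      have hiter : ∀ n, L (M^[n] x) = L x := by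
        intro n
        induction n with
        | zero => simp
        | succ n ih => rw [Function.iterate_succ_apply', hLinv, ih]
      have hbound : ∀ n, mseq hne M x n ≤ (L x : ℝ) ∧ (L x : ℝ) ≤ sseq hne M x n := by
        intro n
        have := hL (M^[n] x) hne
        rw [hiter n] at this
        exact this
      have key : ∀ ε : ℝ, 0 < ε → |(L x : ℝ) - (K x : ℝ)| ≤ ε := by
        intro ε hε
        have hev : ∀ᶠ n in Filter.atTop, ∀ i, dist ((M^[n] x) i : ℝ) (K x : ℝ) < ε :=
          Filter.eventually_all.2 fun i => Metric.tendsto_nhds.mp (htend x i) ε hε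
        obtain ⟨n, hn⟩ := hev.exists
        have hup : sseq hne M x n ≤ (K x : ℝ) + ε := by
          refine Finset.sup'_le _ _ fun i _ => ?_
          have := hn i
          rw [Real.dist_eq] at this
          linarith [abs_lt.mp this |>.2]
        have hdown : (K x : ℝ) - ε ≤ mseq hne M x n := by
          refine Finset.le_inf' _ _ fun i _ => ?_
          have := hn i
          rw [Real.dist_eq] at this
          linarith [abs_lt.mp this |>.1]
        have h1 := (hbound n).1
        have h2 := (hbound n).2
        rw [abs_le]
        constructor <;> linarith
      by_contra hne'
      have habs : 0 < |(L x : ℝ) - (K x : ℝ)| := by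
        rw [abs_pos, sub_ne_zero]
        exact fun h => hne' h
      have := key (|(L x : ℝ) - (K x : ℝ)| / 2) (by linarith)
      linarith
end

section
/- Let I ⊆ ℝ be an interval, p ∈ ℕ, d = (d₁,…,d_p) ∈ ℕᵖ, α ∈ ℕ_p^d, and let 𝐌 = (M₁,…,M_p) be a d-averaging mapping on I such that each Mᵢ is continuous and strict. If the incidence graph G_α is ergodic, then there exists a unique 𝐌_α-invariant mean K_α : Iᵖ → I; moreover K_α is continuous and strict, and the iterates 𝐌_αⁿ converge pointwise on Iᵖ to 𝐊_α := (K_α,…,K_α). -/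
/-!
An ergodic incidence graph is primitive: there is `N > 0` with a walk of length exactly `N`
between any two vertices, because the lengths of closed walks at a vertex form a numerical
semigroup of gcd `1`. Along an orbit of `𝐌_α` the least coordinate increases and the largest
decreases; by strictness, if `min (𝐌_αᴺ x) = min x` then the minimum propagates backwards along
all walks of length `N`, so `x` is constant. By compactness and LaSalle's invariance principle
every limit point of an orbit is therefore constant, so the minima and maxima converge to a common
value `K_α x`, which every coordinate converges to. An invariant mean is squeezed between the
minimum and the maximum along the orbit, which gives uniqueness, and `K_α` is both a supremum and
an infimum of continuous functions, hence continuous.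
-/

open Filter Topology Function

section Walks

variable {V : Type*} {E : V → V → Prop} {a b c : V} {m n : ℕ}

theorem hasWalkOfLength_zero : HasWalkOfLength E a b 0 ↔ a = b := by
  constructor
  · rintro ⟨f, rfl, rfl, -⟩
    rfl
  · rintro rfl
    exact ⟨fun _ => a, rfl, rfl, fun i hi => absurd hi i.not_lt_zero⟩

theorem hasWalkOfLength_succ :
    HasWalkOfLength E a c (n + 1) ↔ ∃ b, HasWalkOfLength E a b n ∧ E b c := by
  constructor
  · rintro ⟨f, hf0, rfl, hf⟩
    exact ⟨f n, ⟨f, hf0, rfl, fun i hi => hf i (by omega)⟩, hf n n.lt_succ_self⟩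
  · rintro ⟨b, ⟨f, hf0, rfl, hf⟩, hbc⟩
    refine ⟨fun i => if i ≤ n then f i else c, by simp [hf0], by simp, fun i hi => ?_⟩
    rcases Nat.lt_or_eq_of_le (Nat.lt_succ_iff.mp hi) with hi | rfl
    · simpa [hi.le, Nat.succ_le_of_lt hi] using hf i hi
    · simpa using hbc

theorem HasWalkOfLength.trans (hab : HasWalkOfLength E a b m) (hbc : HasWalkOfLength E b c n) :
    HasWalkOfLength E a c (m + n) := by
  induction n generalizing c with
  | zero => rwa [hasWalkOfLength_zero.mp hbc] at hab
  | succ n ih =>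
    obtain ⟨b', hbb', hb'c⟩ := hasWalkOfLength_succ.mp hbc
    exact hasWalkOfLength_succ.mpr ⟨b', ih hbb', hb'c⟩

theorem HasWalkOfLength.exists_rel_of_pos (h : HasWalkOfLength E a b n) (hn : 0 < n) :
    ∃ c, E c b := by
  obtain ⟨n, rfl⟩ := Nat.exists_eq_add_one_of_ne_zero hn.ne'
  obtain ⟨c, -, hc⟩ := hasWalkOfLength_succ.mp h
  exact ⟨c, hc⟩

theorem Reaches.exists_hasWalkOfLength (h : Reaches E a b) : ∃ n, HasWalkOfLength E a b n := by
  induction h with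
  | refl => exact ⟨0, hasWalkOfLength_zero.mpr rfl⟩
  | tail _ hcd ih =>
    obtain ⟨n, hn⟩ := ih
    exact ⟨n + 1, hasWalkOfLength_succ.mpr ⟨_, hn, hcd⟩⟩

theorem IsCycle.hasWalkOfLength {f : ℕ → V} (h : IsCycle E f n) :
    HasWalkOfLength E (f 0) (f 0) n :=
  ⟨f, rfl, h.2.2.1.symm, h.2.1⟩

variable (E) in
def closedWalkLengths (v : V) : AddSubmonoid ℕ where
  carrier := {n | HasWalkOfLength E v v n}
  zero_mem' := hasWalkOfLength_zero.mpr rfl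
  add_mem' := HasWalkOfLength.trans

theorem setGcd_closedWalkLengths_eq_one (hirr : ∀ v w : V, Reaches E v w)
    (haper : IsAperiodic E) (v : V) : Nat.setGcd (closedWalkLengths E v) = 1 := by
  set k := Nat.setGcd (closedWalkLengths E v)
  -- Going around a cycle once or twice on a detour from `v` gives closed walks at `v`
  -- whose lengths differ by the length of the cycle.
  have hcycle : ∀ f n, IsCycle E f n → k ∣ n := by
    intro f n hf
    obtain ⟨a, ha⟩ := (hirr v (f 0)).exists_hasWalkOfLength
    obtain ⟨b, hb⟩ := (hirr (f 0) v).exists_hasWalkOfLength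
    have hcyc := hf.hasWalkOfLength
    have h₁ : k ∣ a + n + b := Nat.setGcd_dvd_of_mem ((ha.trans hcyc).trans hb)
    have h₂ : k ∣ a + n + n + b := Nat.setGcd_dvd_of_mem (s := (closedWalkLengths E v : Set ℕ))
      (((ha.trans hcyc).trans hcyc).trans hb)
    rw [show a + n + n + b = a + n + b + n by omega] at h₂
    exact (Nat.dvd_add_right h₁).mp h₂
  by_contra hk
  apply haper
  rcases Nat.lt_or_gt_of_ne hk with hk | hk
  · -- `k = 0` forces every cycle to have length `0`, so there are no cycles at all.
    refine ⟨2, one_lt_two, fun f n hf => ?_⟩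
    have := hcycle f n hf
    rw [Nat.lt_one_iff.mp hk, zero_dvd_iff] at this
    exact absurd this hf.1.ne'
  · exact ⟨k, hk, hcycle⟩

theorem exists_forall_ge_hasWalkOfLength_self (hirr : ∀ v w : V, Reaches E v w)
    (haper : IsAperiodic E) (v : V) : ∃ n₀, ∀ n ≥ n₀, HasWalkOfLength E v v n := by
  obtain ⟨n₀, h⟩ := Nat.exists_mem_closure_of_ge (s := (closedWalkLengths E v : Set ℕ))
  refine ⟨n₀, fun n hn => ?_⟩
  have := h n hn (by rw [setGcd_closedWalkLengths_eq_one hirr haper v]; exact one_dvd n)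
  rwa [AddSubmonoid.closure_eq] at this

theorem IsErgodic.exists_pos_forall_hasWalkOfLength [Finite V] (h : IsErgodic E) :
    ∃ N, 0 < N ∧ ∀ a b : V, HasWalkOfLength E a b N := by
  obtain ⟨⟨v⟩, hirr, haper⟩ := h
  obtain ⟨n₀, hn₀⟩ := exists_forall_ge_hasWalkOfLength_self hirr haper v
  choose into hinto using fun a => (hirr a v).exists_hasWalkOfLength
  choose out hout using fun b => (hirr v b).exists_hasWalkOfLength
  obtain ⟨C, hC⟩ := Finite.exists_le fun ab : V × V => into ab.1 + out ab.2
  refine ⟨n₀ + C + 1, by omega, fun a b => ?_⟩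
  have hab : into a + out b ≤ C := hC (a, b)
  have hloop := hn₀ (n₀ + C + 1 - (into a + out b)) (by omega)
  have := ((hinto a).trans hloop).trans (hout b)
  rwa [show into a + (n₀ + C + 1 - (into a + out b)) + out b = n₀ + C + 1 by omega] at this

end Walks

section Coordinates

variable {I : Set ℝ} {ι : Type*} [Fintype ι] [Nonempty ι]

noncomputable def minCoord (x : ι → I) : ℝ :=
  Finset.univ.inf' Finset.univ_nonempty fun i => (x i : ℝ)

noncomputable def maxCoord (x : ι → I) : ℝ :=
  Finset.univ.sup' Finset.univ_nonempty fun i => (x i : ℝ)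

theorem le_minCoord_iff {x : ι → I} {c : ℝ} : c ≤ minCoord x ↔ ∀ i, c ≤ x i := by
  simp [minCoord]

theorem maxCoord_le_iff {x : ι → I} {c : ℝ} : maxCoord x ≤ c ↔ ∀ i, (x i : ℝ) ≤ c := by
  simp [maxCoord]

theorem minCoord_le (x : ι → I) (i : ι) : minCoord x ≤ x i :=
  le_minCoord_iff.mp le_rfl i

theorem le_maxCoord (x : ι → I) (i : ι) : (x i : ℝ) ≤ maxCoord x :=
  maxCoord_le_iff.mp le_rfl i

theorem exists_apply_eq_minCoord (x : ι → I) : ∃ i, (x i : ℝ) = minCoord x := by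
  obtain ⟨i, -, hi⟩ := Finset.exists_mem_eq_inf' Finset.univ_nonempty fun i => (x i : ℝ)
  exact ⟨i, hi.symm⟩

theorem exists_apply_eq_maxCoord (x : ι → I) : ∃ i, (x i : ℝ) = maxCoord x := by
  obtain ⟨i, -, hi⟩ := Finset.exists_mem_eq_sup' Finset.univ_nonempty fun i => (x i : ℝ)
  exact ⟨i, hi.symm⟩

theorem minCoord_mem (x : ι → I) : minCoord x ∈ I := by
  obtain ⟨i, hi⟩ := exists_apply_eq_minCoord x
  exact hi ▸ (x i).2

theorem maxCoord_mem (x : ι → I) : maxCoord x ∈ I := by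
  obtain ⟨i, hi⟩ := exists_apply_eq_maxCoord x
  exact hi ▸ (x i).2

theorem minCoord_le_maxCoord (x : ι → I) : minCoord x ≤ maxCoord x :=
  (minCoord_le x (Classical.arbitrary ι)).trans (le_maxCoord x _)

theorem minCoord_eq_maxCoord_of_forall_eq {x : ι → I} (hx : ∀ i j, x i = x j) :
    minCoord x = maxCoord x := by
  obtain ⟨i, hi⟩ := exists_apply_eq_minCoord x
  obtain ⟨j, hj⟩ := exists_apply_eq_maxCoord x
  rw [← hi, ← hj, hx i j]

theorem continuous_minCoord : Continuous (minCoord : (ι → I) → ℝ) :=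
  Continuous.finset_inf'_apply _ fun i _ => continuous_subtype_val.comp (continuous_apply i)

theorem continuous_maxCoord : Continuous (maxCoord : (ι → I) → ℝ) :=
  Continuous.finset_sup'_apply _ fun i _ => continuous_subtype_val.comp (continuous_apply i)

variable {M : (ι → I) → I}

theorem IsMeanOn.minCoord_le (hM : IsMeanOn I M) (x : ι → I) : minCoord x ≤ M x :=
  (hM x Finset.univ_nonempty).1

theorem IsMeanOn.le_maxCoord (hM : IsMeanOn I M) (x : ι → I) : (M x : ℝ) ≤ maxCoord x :=
  (hM x Finset.univ_nonempty).2

theorem IsStrictMeanOn.apply_eq_of_forall_le {x : ι → I} {c : ℝ} (hM : IsStrictMeanOn I M)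
    (hc : ∀ i, c ≤ x i) (hMx : (M x : ℝ) = c) (i : ι) : (x i : ℝ) = c := by
  have hmin : minCoord x = c := le_antisymm (hMx ▸ hM.1.minCoord_le x) (le_minCoord_iff.mpr hc)
  have hconst : ∀ i j, x i = x j := by
    by_contra! h
    exact ((hM.2 x Finset.univ_nonempty h).1 : minCoord x < M x).ne (hmin.trans hMx.symm)
  obtain ⟨j, hj⟩ := exists_apply_eq_minCoord x
  rw [hconst i j, hj, hmin]

theorem IsStrictMeanOn.apply_eq_of_forall_ge {x : ι → I} {c : ℝ} (hM : IsStrictMeanOn I M)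
    (hc : ∀ i, (x i : ℝ) ≤ c) (hMx : (M x : ℝ) = c) (i : ι) : (x i : ℝ) = c := by
  have hmax : maxCoord x = c := le_antisymm (maxCoord_le_iff.mpr hc) (hMx ▸ hM.1.le_maxCoord x)
  have hconst : ∀ i j, x i = x j := by
    by_contra! h
    exact ((hM.2 x Finset.univ_nonempty h).2 : M x < maxCoord x).ne (hMx.trans hmax.symm)
  obtain ⟨j, hj⟩ := exists_apply_eq_maxCoord x
  rw [hconst i j, hj, hmax]

end Coordinates

-- LaSalle's invariance principle for a discrete dynamical system.
theorem apply_iterate_eq_of_tendsto_subseq {X : Type*} [TopologicalSpace X] {T : X → X}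
    (hT : Continuous T) {V : X → ℝ} (hV : Continuous V) (hVT : ∀ x, V x ≤ V (T x)) {x y : X}
    {φ : ℕ → ℕ} (hφ : StrictMono φ) (hy : Tendsto (fun k => T^[φ k] x) atTop (𝓝 y)) (N : ℕ) :
    V (T^[N] y) = V y := by
  have hmono : Monotone fun n => V (T^[n] x) :=
    monotone_nat_of_le_succ fun n => by rw [iterate_succ_apply']; exact hVT _
  have hlim : Tendsto (fun k => V (T^[φ k] x)) atTop (𝓝 (V y)) := (hV.tendsto y).comp hy
  have hshift : Tendsto (fun k => V (T^[N] (T^[φ k] x))) atTop (𝓝 (V (T^[N] y))) :=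
    ((hV.comp (hT.iterate N)).tendsto y).comp hy
  refine tendsto_nhds_unique hshift (tendsto_of_tendsto_of_tendsto_of_le_of_le hlim
    (hlim.comp (tendsto_add_atTop_nat N)) (fun k => ?_) (fun k => ?_))
  · simpa only [← iterate_add_apply] using hmono (Nat.le_add_left (φ k) N)
  · simpa only [← iterate_add_apply, comp_apply, add_comm k N] using
      hmono (hφ.add_le_nat N k)

section MeanTypeMap

variable {I : Set ℝ} {p : ℕ} {d : Fin p → ℕ} {M : ∀ i, (Fin (d i) → I) → I}
  {α : ∀ i, Fin (d i) → Fin p}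

theorem continuous_meanTypeMap (hcont : ∀ i, Continuous (M i)) :
    Continuous (MeanTypeMap d M α) :=
  continuous_pi fun i => (hcont i).comp (continuous_pi fun j => continuous_apply (α i j))

variable [Nonempty (Fin p)] [∀ i, Nonempty (Fin (d i))]

theorem minCoord_le_minCoord_meanTypeMap (hM : ∀ i, IsMeanOn I (M i)) (x : Fin p → I) :
    minCoord x ≤ minCoord (MeanTypeMap d M α x) :=
  le_minCoord_iff.mpr fun i =>
    (le_minCoord_iff.mpr fun j => minCoord_le x (α i j)).trans ((hM i).minCoord_le _)

theorem maxCoord_meanTypeMap_le (hM : ∀ i, IsMeanOn I (M i)) (x : Fin p → I) :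
    maxCoord (MeanTypeMap d M α x) ≤ maxCoord x :=
  maxCoord_le_iff.mpr fun i =>
    ((hM i).le_maxCoord _).trans (maxCoord_le_iff.mpr fun j => le_maxCoord x (α i j))

theorem monotone_minCoord_iterate (hM : ∀ i, IsMeanOn I (M i)) (x : Fin p → I) :
    Monotone fun n => minCoord ((MeanTypeMap d M α)^[n] x) :=
  monotone_nat_of_le_succ fun n => by
    rw [iterate_succ_apply']; exact minCoord_le_minCoord_meanTypeMap hM _

theorem antitone_maxCoord_iterate (hM : ∀ i, IsMeanOn I (M i)) (x : Fin p → I) :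
    Antitone fun n => maxCoord ((MeanTypeMap d M α)^[n] x) :=
  antitone_nat_of_succ_le fun n => by
    rw [iterate_succ_apply']; exact maxCoord_meanTypeMap_le hM _

theorem apply_eq_minCoord_of_hasWalkOfLength (hM : ∀ i, IsStrictMeanOn I (M i))
    {x : Fin p → I} {a i : Fin p} {n : ℕ} (hw : HasWalkOfLength (IncidenceE d α) a i n)
    (hi : (((MeanTypeMap d M α)^[n] x) i : ℝ) = minCoord x) : (x a : ℝ) = minCoord x := by
  induction n generalizing i with
  | zero => rwa [hasWalkOfLength_zero.mp hw]
  | succ n ih =>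
    obtain ⟨_, hw, j, rfl⟩ := hasWalkOfLength_succ.mp hw
    rw [iterate_succ_apply'] at hi
    refine ih hw ((hM i).apply_eq_of_forall_le (fun j => ?_) hi j)
    exact (monotone_minCoord_iterate (fun i => (hM i).1) x n.zero_le).trans (minCoord_le _ _)

theorem apply_eq_maxCoord_of_hasWalkOfLength (hM : ∀ i, IsStrictMeanOn I (M i))
    {x : Fin p → I} {a i : Fin p} {n : ℕ} (hw : HasWalkOfLength (IncidenceE d α) a i n)
    (hi : (((MeanTypeMap d M α)^[n] x) i : ℝ) = maxCoord x) : (x a : ℝ) = maxCoord x := by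
  induction n generalizing i with
  | zero => rwa [hasWalkOfLength_zero.mp hw]
  | succ n ih =>
    obtain ⟨_, hw, j, rfl⟩ := hasWalkOfLength_succ.mp hw
    rw [iterate_succ_apply'] at hi
    refine ih hw ((hM i).apply_eq_of_forall_ge (fun j => ?_) hi j)
    exact (le_maxCoord _ _).trans (antitone_maxCoord_iterate (fun i => (hM i).1) x n.zero_le)

variable {N : ℕ}

theorem minCoord_lt_minCoord_iterate (hM : ∀ i, IsStrictMeanOn I (M i))
    (hN : ∀ a b, HasWalkOfLength (IncidenceE d α) a b N) {x : Fin p → I}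
    (hx : ∃ a b, x a ≠ x b) : minCoord x < minCoord ((MeanTypeMap d M α)^[N] x) := by
  refine (monotone_minCoord_iterate (fun i => (hM i).1) x N.zero_le).lt_of_ne fun heq => ?_
  obtain ⟨i, hi⟩ := exists_apply_eq_minCoord ((MeanTypeMap d M α)^[N] x)
  have h a := apply_eq_minCoord_of_hasWalkOfLength hM (hN a i) (hi.trans heq.symm)
  obtain ⟨a, b, hab⟩ := hx
  exact hab (Subtype.ext ((h a).trans (h b).symm))

theorem maxCoord_iterate_lt_maxCoord (hM : ∀ i, IsStrictMeanOn I (M i))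
    (hN : ∀ a b, HasWalkOfLength (IncidenceE d α) a b N) {x : Fin p → I}
    (hx : ∃ a b, x a ≠ x b) : maxCoord ((MeanTypeMap d M α)^[N] x) < maxCoord x := by
  refine (antitone_maxCoord_iterate (fun i => (hM i).1) x N.zero_le).lt_of_ne fun heq => ?_
  obtain ⟨i, hi⟩ := exists_apply_eq_maxCoord ((MeanTypeMap d M α)^[N] x)
  have h a := apply_eq_maxCoord_of_hasWalkOfLength hM (hN a i) (hi.trans heq)
  obtain ⟨a, b, hab⟩ := hx
  exact hab (Subtype.ext ((h a).trans (h b).symm))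

theorem exists_tendsto_iterate_subseq (hI : I.OrdConnected) (hM : ∀ i, IsMeanOn I (M i))
    (x : Fin p → I) :
    ∃ (y : Fin p → I) (φ : ℕ → ℕ), StrictMono φ ∧
      Tendsto (fun k => (MeanTypeMap d M α)^[φ k] x) atTop (𝓝 y) := by
  set S : Set I := Subtype.val ⁻¹' Set.Icc (minCoord x) (maxCoord x)
  have hS : IsCompact S := (Topology.IsInducing.subtypeVal.isCompact_preimage_iff
    (by rw [Subtype.range_coe]; exact hI.out (minCoord_mem x) (maxCoord_mem x))).mpr isCompact_Icc
  have horbit : ∀ n, (MeanTypeMap d M α)^[n] x ∈ Set.univ.pi fun _ => S := fun n i _ =>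
    ⟨(monotone_minCoord_iterate hM x n.zero_le).trans (minCoord_le _ i),
      (le_maxCoord _ i).trans (antitone_maxCoord_iterate hM x n.zero_le)⟩
  obtain ⟨y, -, φ, hφ, hy⟩ := (isCompact_univ_pi fun _ => hS).tendsto_subseq horbit
  exact ⟨y, φ, hφ, hy⟩

theorem forall_eq_of_tendsto_iterate_subseq (hM : ∀ i, IsStrictMeanOn I (M i))
    (hcont : ∀ i, Continuous (M i)) (hN : ∀ a b, HasWalkOfLength (IncidenceE d α) a b N)
    {x y : Fin p → I} {φ : ℕ → ℕ} (hφ : StrictMono φ)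
    (hy : Tendsto (fun k => (MeanTypeMap d M α)^[φ k] x) atTop (𝓝 y)) : ∀ i j, y i = y j := by
  by_contra! hy'
  exact (minCoord_lt_minCoord_iterate hM hN hy').ne' <|
    apply_iterate_eq_of_tendsto_subseq (continuous_meanTypeMap hcont) continuous_minCoord
      (minCoord_le_minCoord_meanTypeMap fun i => (hM i).1) hφ hy N

end MeanTypeMap

section MeanTypeLimit

variable {I : Set ℝ} {p : ℕ} [Nonempty (Fin p)] {d : Fin p → ℕ} [∀ i, Nonempty (Fin (d i))]
  {M : ∀ i, (Fin (d i) → I) → I} {α : ∀ i, Fin (d i) → Fin p}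

variable (d M α) in
noncomputable def meanTypeLimit (x : Fin p → I) : ℝ :=
  ⨆ n, minCoord ((MeanTypeMap d M α)^[n] x)

theorem bddAbove_minCoord_iterate (hM : ∀ i, IsMeanOn I (M i)) (x : Fin p → I) :
    BddAbove (Set.range fun n => minCoord ((MeanTypeMap d M α)^[n] x)) :=
  ⟨maxCoord x, by
    rintro _ ⟨n, rfl⟩
    exact (minCoord_le_maxCoord _).trans (antitone_maxCoord_iterate hM x n.zero_le)⟩

theorem tendsto_minCoord_iterate (hM : ∀ i, IsMeanOn I (M i)) (x : Fin p → I) :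
    Tendsto (fun n => minCoord ((MeanTypeMap d M α)^[n] x)) atTop (𝓝 (meanTypeLimit d M α x)) :=
  tendsto_atTop_ciSup (monotone_minCoord_iterate hM x) (bddAbove_minCoord_iterate hM x)

theorem minCoord_iterate_le_meanTypeLimit (hM : ∀ i, IsMeanOn I (M i)) (x : Fin p → I)
    (n : ℕ) : minCoord ((MeanTypeMap d M α)^[n] x) ≤ meanTypeLimit d M α x :=
  le_ciSup (bddAbove_minCoord_iterate hM x) n

theorem meanTypeLimit_le_maxCoord_iterate (hM : ∀ i, IsMeanOn I (M i)) (x : Fin p → I)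
    (n : ℕ) : meanTypeLimit d M α x ≤ maxCoord ((MeanTypeMap d M α)^[n] x) :=
  ciSup_le fun k => (monotone_minCoord_iterate hM x (le_max_left k n)).trans <|
    (minCoord_le_maxCoord _).trans (antitone_maxCoord_iterate hM x (le_max_right k n))

theorem meanTypeLimit_mem (hI : I.OrdConnected) (hM : ∀ i, IsMeanOn I (M i)) (x : Fin p → I) :
    meanTypeLimit d M α x ∈ I :=
  hI.out (minCoord_mem x) (maxCoord_mem x)
    ⟨minCoord_iterate_le_meanTypeLimit hM x 0, meanTypeLimit_le_maxCoord_iterate hM x 0⟩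

theorem meanTypeLimit_meanTypeMap (hM : ∀ i, IsMeanOn I (M i)) (x : Fin p → I) :
    meanTypeLimit d M α (MeanTypeMap d M α x) = meanTypeLimit d M α x := by
  refine tendsto_nhds_unique (tendsto_minCoord_iterate hM _) ?_
  simpa only [comp_def, iterate_succ_apply] using
    (tendsto_minCoord_iterate hM x).comp (tendsto_add_atTop_nat 1)

variable {N : ℕ}

theorem minCoord_lt_meanTypeLimit (hM : ∀ i, IsStrictMeanOn I (M i))
    (hN : ∀ a b, HasWalkOfLength (IncidenceE d α) a b N) {x : Fin p → I}
    (hx : ∃ a b, x a ≠ x b) : minCoord x < meanTypeLimit d M α x :=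
  (minCoord_lt_minCoord_iterate hM hN hx).trans_le
    (minCoord_iterate_le_meanTypeLimit (fun i => (hM i).1) x N)

theorem meanTypeLimit_lt_maxCoord (hM : ∀ i, IsStrictMeanOn I (M i))
    (hN : ∀ a b, HasWalkOfLength (IncidenceE d α) a b N) {x : Fin p → I}
    (hx : ∃ a b, x a ≠ x b) : meanTypeLimit d M α x < maxCoord x :=
  (meanTypeLimit_le_maxCoord_iterate (fun i => (hM i).1) x N).trans_lt
    (maxCoord_iterate_lt_maxCoord hM hN hx)

theorem tendsto_maxCoord_iterate (hI : I.OrdConnected) (hM : ∀ i, IsStrictMeanOn I (M i))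
    (hcont : ∀ i, Continuous (M i)) (hN : ∀ a b, HasWalkOfLength (IncidenceE d α) a b N)
    (x : Fin p → I) :
    Tendsto (fun n => maxCoord ((MeanTypeMap d M α)^[n] x)) atTop (𝓝 (meanTypeLimit d M α x)) := by
  have hM' i := (hM i).1
  obtain ⟨y, φ, hφ, hy⟩ := exists_tendsto_iterate_subseq hI hM' x
  have hmin : minCoord y = meanTypeLimit d M α x :=
    tendsto_nhds_unique ((continuous_minCoord.tendsto y).comp hy)
      ((tendsto_minCoord_iterate hM' x).comp hφ.tendsto_atTop)
  have hmax : Tendsto (fun k => maxCoord ((MeanTypeMap d M α)^[φ k] x)) atTop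
      (𝓝 (meanTypeLimit d M α x)) := by
    rw [← hmin, minCoord_eq_maxCoord_of_forall_eq
      (forall_eq_of_tendsto_iterate_subseq hM hcont hN hφ hy)]
    exact (continuous_maxCoord.tendsto y).comp hy
  exact (tendsto_iff_tendsto_subseq_of_antitone (antitone_maxCoord_iterate hM' x)
    hφ.tendsto_atTop).mpr hmax

theorem tendsto_iterate_apply (hI : I.OrdConnected) (hM : ∀ i, IsStrictMeanOn I (M i))
    (hcont : ∀ i, Continuous (M i)) (hN : ∀ a b, HasWalkOfLength (IncidenceE d α) a b N)
    (x : Fin p → I) (i : Fin p) :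
    Tendsto (fun n => (((MeanTypeMap d M α)^[n] x) i : ℝ)) atTop (𝓝 (meanTypeLimit d M α x)) :=
  tendsto_of_tendsto_of_tendsto_of_le_of_le (tendsto_minCoord_iterate (fun i => (hM i).1) x)
    (tendsto_maxCoord_iterate hI hM hcont hN x) (fun _ => minCoord_le _ i)
    (fun _ => le_maxCoord _ i)

theorem eq_meanTypeLimit_of_isMeanOn (hI : I.OrdConnected) (hM : ∀ i, IsStrictMeanOn I (M i))
    (hcont : ∀ i, Continuous (M i)) (hN : ∀ a b, HasWalkOfLength (IncidenceE d α) a b N)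
    {L : (Fin p → I) → I} (hL : IsMeanOn I L) (hLinv : ∀ x, L (MeanTypeMap d M α x) = L x)
    (x : Fin p → I) : (L x : ℝ) = meanTypeLimit d M α x := by
  have hLn : ∀ n, L ((MeanTypeMap d M α)^[n] x) = L x := fun n => by
    induction n with
    | zero => rfl
    | succ n ih => rw [iterate_succ_apply', hLinv, ih]
  refine tendsto_nhds_unique tendsto_const_nhds (tendsto_of_tendsto_of_tendsto_of_le_of_le
    (tendsto_minCoord_iterate (fun i => (hM i).1) x) (tendsto_maxCoord_iterate hI hM hcont hN x)
    (fun n => ?_) (fun n => ?_))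
  · simpa only [hLn] using hL.minCoord_le ((MeanTypeMap d M α)^[n] x)
  · simpa only [hLn] using hL.le_maxCoord ((MeanTypeMap d M α)^[n] x)

theorem continuous_meanTypeLimit (hI : I.OrdConnected) (hM : ∀ i, IsStrictMeanOn I (M i))
    (hcont : ∀ i, Continuous (M i)) (hN : ∀ a b, HasWalkOfLength (IncidenceE d α) a b N) :
    Continuous (meanTypeLimit d M α) := by
  have hM' i := (hM i).1
  have hiter n : Continuous ((MeanTypeMap d M α)^[n]) := (continuous_meanTypeMap hcont).iterate n
  have hinf : meanTypeLimit d M α = fun x => ⨅ n, maxCoord ((MeanTypeMap d M α)^[n] x) :=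
    funext fun x => tendsto_nhds_unique (tendsto_maxCoord_iterate hI hM hcont hN x)
      (tendsto_atTop_ciInf (antitone_maxCoord_iterate hM' x)
        ⟨minCoord x, by
          rintro _ ⟨n, rfl⟩
          exact (monotone_minCoord_iterate hM' x n.zero_le).trans (minCoord_le_maxCoord _)⟩)
  refine continuous_iff_lower_upperSemicontinuous.mpr ⟨?_, ?_⟩
  · exact lowerSemicontinuous_ciSup (bddAbove_minCoord_iterate hM')
      fun n => (continuous_minCoord.comp (hiter n)).lowerSemicontinuous
  · rw [hinf]
    refine upperSemicontinuous_ciInf (fun x => ⟨minCoord x, ?_⟩)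
      fun n => (continuous_maxCoord.comp (hiter n)).upperSemicontinuous
    rintro _ ⟨n, rfl⟩
    exact (monotone_minCoord_iterate hM' x n.zero_le).trans (minCoord_le_maxCoord _)

end MeanTypeLimit

theorem stmt_11_general {I : Set ℝ} (hI : I.OrdConnected) {p : ℕ}
    (d : Fin p → ℕ)
    (M : ∀ i, (Fin (d i) → I) → I)
    (hstrict : ∀ i, IsStrictMeanOn I (M i)) (hcont : ∀ i, Continuous (M i))
    (α : ∀ i, Fin (d i) → Fin p)
    (herg : IsErgodic (IncidenceE d α)) :
    ∃ K : (Fin p → I) → I, IsMeanOn I K ∧ Continuous K ∧ IsStrictMeanOn I K ∧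
      (∀ x, K (MeanTypeMap d M α x) = K x) ∧
      (∀ L : (Fin p → I) → I, IsMeanOn I L → (∀ x, L (MeanTypeMap d M α x) = L x) → L = K) ∧
      (∀ (x : Fin p → I) (i : Fin p),
        Filter.Tendsto (fun n => (((MeanTypeMap d M α)^[n] x) i : ℝ))
          Filter.atTop (nhds (K x))) := by
  have : Nonempty (Fin p) := herg.1
  obtain ⟨N, hN₀, hN⟩ := herg.exists_pos_forall_hasWalkOfLength
  have (i : Fin p) : Nonempty (Fin (d i)) := by
    obtain ⟨_, j, -⟩ := (hN i i).exists_rel_of_pos hN₀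
    exact ⟨j⟩
  have hmean i := (hstrict i).1
  let K x : I := ⟨meanTypeLimit d M α x, meanTypeLimit_mem hI hmean x⟩
  have hK : IsMeanOn I K := fun x _ =>
    ⟨minCoord_iterate_le_meanTypeLimit hmean x 0, meanTypeLimit_le_maxCoord_iterate hmean x 0⟩
  refine ⟨K, hK, (continuous_meanTypeLimit hI hstrict hcont hN).subtype_mk _,
    ⟨hK, fun x _ hx => ⟨minCoord_lt_meanTypeLimit hstrict hN hx,
      meanTypeLimit_lt_maxCoord hstrict hN hx⟩⟩,
    fun x => Subtype.ext (meanTypeLimit_meanTypeMap hmean x),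
    fun L hL hLinv => funext fun x =>
      Subtype.ext (eq_meanTypeLimit_of_isMeanOn hI hstrict hcont hN hL hLinv x),
    tendsto_iterate_apply hI hstrict hcont hN⟩

/-- If `𝐌 = (M₁,…,M_p)` is a `d`-averaging mapping on an interval `I` with all `Mᵢ`
continuous and strict, and the incidence graph `G_α` is ergodic, then there is a unique
`𝐌_α`-invariant mean `K_α`; it is continuous and strict, and the iterates `𝐌_αⁿ`
converge pointwise to `𝐊_α = (K_α,…,K_α)`. -/
theorem stmt_11 {I : Set ℝ} (hI : I.OrdConnected) {p : ℕ} (hp : 0 < p)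
    (d : Fin p → ℕ) (hd : ∀ i, 0 < d i)
    (M : ∀ i, (Fin (d i) → I) → I)
    (hstrict : ∀ i, IsStrictMeanOn I (M i)) (hcont : ∀ i, Continuous (M i))
    (α : ∀ i, Fin (d i) → Fin p)
    (herg : IsErgodic (IncidenceE d α)) :
    ∃ K : (Fin p → I) → I, IsMeanOn I K ∧ Continuous K ∧ IsStrictMeanOn I K ∧
      (∀ x, K (MeanTypeMap d M α x) = K x) ∧
      (∀ L : (Fin p → I) → I, IsMeanOn I L → (∀ x, L (MeanTypeMap d M α x) = L x) → L = K) ∧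
      (∀ (x : Fin p → I) (i : Fin p),
        Filter.Tendsto (fun n => (((MeanTypeMap d M α)^[n] x) i : ℝ))
          Filter.atTop (nhds (K x))) :=
  stmt_11_general hI d M hstrict hcont α herg
end

section
/- Let I ⊆ ℝ be an interval, p ∈ ℕ, d ∈ ℕᵖ, α ∈ ℕ_p^d, and let 𝐌 = (M₁,…,M_p) be a d-averaging mapping on I with each Mᵢ continuous and strict, such that the root graph 𝓡(G_α) is ergodic, and let K_α be the unique 𝐌_α-invariant mean. If each of M₁,…,M_p is nondecreasing with respect to each of its variables, then K_α is nondecreasing with respect to each of its variables. -/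
/-!
Let `F = 𝐌_α`. Since every coordinate of `F z` is a mean of coordinates of `z`, the maxima
`max (Fⁿ z)` decrease and stay above `min z`, so `L z := lim max (Fⁿ z) = inf max (Fⁿ z)` is a
mean, and `L ∘ F = L` because the limit does not see a shift of the index. Uniqueness of the
invariant mean gives `L = K`, and `L` is monotone as soon as `F` is, since then every `Fⁿ` and
hence every `max ∘ Fⁿ` is monotone.
-/

open Finset

section MaxLimit

variable {ι : Type*} [Fintype ι] [Nonempty ι] {I : Set ℝ}

def coordMin (z : ι → I) : ℝ := univ.inf' univ_nonempty fun i => (z i : ℝ)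

def coordMax (z : ι → I) : ℝ := univ.sup' univ_nonempty fun i => (z i : ℝ)

lemma coordMin_le_apply (z : ι → I) (i : ι) : coordMin z ≤ z i :=
  inf'_le _ (mem_univ i)

lemma apply_le_coordMax (z : ι → I) (i : ι) : (z i : ℝ) ≤ coordMax z :=
  le_sup' (fun i => (z i : ℝ)) (mem_univ i)

lemma coordMax_mono : Monotone (coordMax : (ι → I) → ℝ) := fun _ _ h =>
  sup'_mono_fun fun i _ => h i

variable {F : (ι → I) → ι → I}

lemma coordMin_le_map_apply (hF : ∀ i, IsMeanOn I fun z => F z i) (z : ι → I) (i : ι) :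
    coordMin z ≤ F z i :=
  (hF i z univ_nonempty).1

lemma coordMax_map_le (hF : ∀ i, IsMeanOn I fun z => F z i) (z : ι → I) :
    coordMax (F z) ≤ coordMax z :=
  sup'_le _ _ fun i _ => (hF i z univ_nonempty).2

lemma coordMin_le_iterate_apply (hF : ∀ i, IsMeanOn I fun z => F z i) (n : ℕ) (z : ι → I)
    (i : ι) : coordMin z ≤ F^[n] z i := by
  induction n generalizing i with
  | zero => exact coordMin_le_apply z i
  | succ n ih =>
    rw [Function.iterate_succ_apply']
    exact (le_inf' _ _ fun k _ => ih k).trans (coordMin_le_map_apply hF _ i)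

lemma antitone_coordMax_iterate (hF : ∀ i, IsMeanOn I fun z => F z i) (z : ι → I) :
    Antitone fun n => coordMax (F^[n] z) :=
  antitone_nat_of_succ_le fun n => by
    simpa only [Function.iterate_succ_apply'] using coordMax_map_le hF (F^[n] z)

lemma bddBelow_range_coordMax_iterate (hF : ∀ i, IsMeanOn I fun z => F z i) (z : ι → I) :
    BddBelow (Set.range fun n => coordMax (F^[n] z)) := by
  refine ⟨coordMin z, ?_⟩
  rintro _ ⟨n, rfl⟩
  obtain ⟨i⟩ := ‹Nonempty ι›
  exact (coordMin_le_iterate_apply hF n z i).trans (apply_le_coordMax _ i)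

variable (F) in
noncomputable def maxLimit (z : ι → I) : ℝ := ⨅ n, coordMax (F^[n] z)

lemma coordMin_le_maxLimit (hF : ∀ i, IsMeanOn I fun z => F z i) (z : ι → I) :
    coordMin z ≤ maxLimit F z := by
  obtain ⟨i⟩ := ‹Nonempty ι›
  exact le_ciInf fun n => (coordMin_le_iterate_apply hF n z i).trans (apply_le_coordMax _ i)

lemma maxLimit_le_coordMax (hF : ∀ i, IsMeanOn I fun z => F z i) (z : ι → I) :
    maxLimit F z ≤ coordMax z :=
  ciInf_le (bddBelow_range_coordMax_iterate hF z) 0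

lemma maxLimit_map (hF : ∀ i, IsMeanOn I fun z => F z i) (z : ι → I) :
    maxLimit F (F z) = maxLimit F z := by
  simp only [maxLimit, ← Function.iterate_succ_apply]
  exact (antitone_coordMax_iterate hF z).ciInf_comp_tendsto_atTop_of_linearOrder
    (Filter.tendsto_add_atTop_nat 1)

lemma monotone_maxLimit (hF : ∀ i, IsMeanOn I fun z => F z i) (hmono : Monotone F) :
    Monotone (maxLimit F) := fun x _ hxy =>
  ciInf_mono (bddBelow_range_coordMax_iterate hF x) fun n =>
    coordMax_mono (hmono.iterate n hxy)

lemma maxLimit_mem (hI : I.OrdConnected) (hF : ∀ i, IsMeanOn I fun z => F z i) (z : ι → I) :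
    maxLimit F z ∈ I := by
  obtain ⟨i, -, hi⟩ := exists_mem_eq_inf' univ_nonempty fun k => (z k : ℝ)
  obtain ⟨j, -, hj⟩ := exists_mem_eq_sup' univ_nonempty fun k => (z k : ℝ)
  refine hI.out (z i).2 (z j).2 ⟨?_, ?_⟩
  · exact hi ▸ coordMin_le_maxLimit hF z
  · exact hj ▸ maxLimit_le_coordMax hF z

noncomputable def maxLimitMean (hI : I.OrdConnected) (hF : ∀ i, IsMeanOn I fun z => F z i)
    (z : ι → I) : I :=
  ⟨maxLimit F z, maxLimit_mem hI hF z⟩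

lemma isMeanOn_maxLimitMean (hI : I.OrdConnected) (hF : ∀ i, IsMeanOn I fun z => F z i) :
    IsMeanOn I (maxLimitMean hI hF) := fun z _ =>
  ⟨coordMin_le_maxLimit hF z, maxLimit_le_coordMax hF z⟩

end MaxLimit

section MeanTypeMap

variable {I : Set ℝ} {p : ℕ} {d : Fin p → ℕ} {M : ∀ i, (Fin (d i) → I) → I}
  {α : ∀ i, Fin (d i) → Fin p}

lemma isMeanOn_meanTypeMap_apply {i : Fin p} (hd : 0 < d i) (hM : IsMeanOn I (M i)) :
    IsMeanOn I fun z => MeanTypeMap d M α z i := by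
  intro z hp
  obtain ⟨lo, hi⟩ := hM (fun j => z (α i j)) ⟨⟨0, hd⟩, mem_univ _⟩
  exact ⟨(le_inf' _ _ fun j _ => inf'_le _ (mem_univ (α i j))).trans lo,
    hi.trans (sup'_le _ _ fun j _ => le_sup' (fun k => (z k : ℝ)) (mem_univ (α i j)))⟩

lemma monotone_meanTypeMap (hmono : ∀ i, Monotone (M i)) : Monotone (MeanTypeMap d M α) :=
  fun _ _ hxy i => hmono i fun j => hxy (α i j)

end MeanTypeMap

theorem stmt_13_general {I : Set ℝ} (hI : I.OrdConnected) {p : ℕ} (hp : 0 < p)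
    (d : Fin p → ℕ) (hd : ∀ i, 0 < d i)
    (M : ∀ i, (Fin (d i) → I) → I)
    (hstrict : ∀ i, IsStrictMeanOn I (M i))
    (α : ∀ i, Fin (d i) → Fin p)
    (K : (Fin p → I) → I)
    (hKuniq : ∀ L : (Fin p → I) → I, IsMeanOn I L →
      (∀ x, L (MeanTypeMap d M α x) = L x) → L = K)
    (hmono : ∀ i, ∀ x y : Fin (d i) → I, (∀ j, (x j : ℝ) ≤ (y j : ℝ)) →
      (M i x : ℝ) ≤ (M i y : ℝ)) :
    ∀ x y : Fin p → I, (∀ i, (x i : ℝ) ≤ (y i : ℝ)) → (K x : ℝ) ≤ (K y : ℝ) := by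
  have : Nonempty (Fin p) := ⟨⟨0, hp⟩⟩
  have hF : ∀ i, IsMeanOn I fun z => MeanTypeMap d M α z i :=
    fun i => isMeanOn_meanTypeMap_apply (hd i) (hstrict i).1
  have hL : maxLimitMean hI hF = K :=
    hKuniq _ (isMeanOn_maxLimitMean hI hF) fun z => Subtype.ext (maxLimit_map hF z)
  intro x y hxy
  rw [← hL]
  exact monotone_maxLimit hF (monotone_meanTypeMap fun i x y h => hmono i x y h) hxy

/-- If `𝐌 = (M₁,…,M_p)` is a `d`-averaging mapping on an interval `I` with all `Mᵢ`
continuous and strict, the root graph `𝓡(G_α)` is ergodic, and `K` is the unique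
`𝐌_α`-invariant mean, then: if every `Mᵢ` is nondecreasing with respect to each of its
variables, then so is `K`. -/
theorem stmt_13 {I : Set ℝ} (hI : I.OrdConnected) {p : ℕ} (hp : 0 < p)
    (d : Fin p → ℕ) (hd : ∀ i, 0 < d i)
    (M : ∀ i, (Fin (d i) → I) → I)
    (hstrict : ∀ i, IsStrictMeanOn I (M i)) (hcont : ∀ i, Continuous (M i))
    (α : ∀ i, Fin (d i) → Fin p)
    (herg : IsErgodic
      (fun a b : (Root (IncidenceE d α) : Set (Fin p)) => IncidenceE d α a b))
    (K : (Fin p → I) → I) (hK : IsMeanOn I K)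
    (hKinv : ∀ x, K (MeanTypeMap d M α x) = K x)
    (hKuniq : ∀ L : (Fin p → I) → I, IsMeanOn I L →
      (∀ x, L (MeanTypeMap d M α x) = L x) → L = K)
    (hmono : ∀ i, ∀ x y : Fin (d i) → I, (∀ j, (x j : ℝ) ≤ (y j : ℝ)) →
      (M i x : ℝ) ≤ (M i y : ℝ)) :
    ∀ x y : Fin p → I, (∀ i, (x i : ℝ) ≤ (y i : ℝ)) → (K x : ℝ) ≤ (K y : ℝ) :=
  stmt_13_general hI hp d hd M hstrict α K hKuniq hmono
end

section
/- Let I = (0,+∞), p ∈ ℕ, d ∈ ℕᵖ, α ∈ ℕ_p^d, and let 𝐌 = (M₁,…,M_p) be a d-averaging mapping on I with each Mᵢ continuous and strict, such that the root graph 𝓡(G_α) is ergodic, and let K_α be the unique 𝐌_α-invariant mean. If each of M₁,…,M_p is positively homogeneous (Mᵢ(t·x) = t·Mᵢ(x) for all t > 0), then every iterate 𝐌_αⁿ is positively homogeneous and K_α is positively homogeneous. -/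
/-- A function on `(0,+∞)^ι` is positively homogeneous: `M(t·x) = t·M(x)` for all `t > 0`. -/
def PosHomog {ι : Type*} (M : (ι → (Set.Ioi (0:ℝ))) → (Set.Ioi (0:ℝ))) : Prop :=
  ∀ (t : ℝ) (ht : 0 < t) (x : ι → (Set.Ioi (0:ℝ))),
    (M (fun i => ⟨t * (x i : ℝ),
        Set.mem_Ioi.mpr (mul_pos ht (Set.mem_Ioi.mp (x i).2))⟩) : ℝ) = t * (M x : ℝ)

/-- Scaling map on `(0,+∞)^ι`. -/
def scl {ι : Type*} (t : ℝ) (ht : 0 < t) (x : ι → (Set.Ioi (0:ℝ))) : ι → (Set.Ioi (0:ℝ)) :=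
  fun i => ⟨t * (x i : ℝ), Set.mem_Ioi.mpr (mul_pos ht (Set.mem_Ioi.mp (x i).2))⟩

lemma finset_inf'_mul {ι : Type*} [Fintype ι] (h : (Finset.univ : Finset ι).Nonempty)
    (t : ℝ) (ht : 0 < t) (x : ι → ℝ) :
    Finset.univ.inf' h (fun i => t * x i) = t * Finset.univ.inf' h x := by
  apply le_antisymm
  · obtain ⟨i, hi, hix⟩ := Finset.exists_mem_eq_inf' h x
    calc Finset.univ.inf' h (fun i => t * x i) ≤ t * x i := Finset.inf'_le _ hi
    _ = t * Finset.univ.inf' h x := by rw [← hix]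
  · apply Finset.le_inf'
    intro i _
    exact mul_le_mul_of_nonneg_left (Finset.inf'_le _ (Finset.mem_univ i)) ht.le

lemma finset_sup'_mul {ι : Type*} [Fintype ι] (h : (Finset.univ : Finset ι).Nonempty)
    (t : ℝ) (ht : 0 < t) (x : ι → ℝ) :
    Finset.univ.sup' h (fun i => t * x i) = t * Finset.univ.sup' h x := by
  apply le_antisymm
  · apply Finset.sup'_le
    intro i _
    exact mul_le_mul_of_nonneg_left (Finset.le_sup' _ (Finset.mem_univ i)) ht.le
  · obtain ⟨i, hi, hix⟩ := Finset.exists_mem_eq_sup' h x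
    calc t * Finset.univ.sup' h x = t * x i := by rw [← hix]
    _ ≤ Finset.univ.sup' h (fun i => t * x i) := Finset.le_sup' (fun i => t * x i) hi

/-- Let `I = (0,+∞)`, let `𝐌 = (M₁,…,M_p)` be a `d`-averaging mapping on `I` with all `Mᵢ`
continuous and strict, suppose the root graph `𝓡(G_α)` is ergodic, and let `K` be the unique
`𝐌_α`-invariant mean. If every `Mᵢ` is positively homogeneous, then every iterate of `𝐌_α`
is positively homogeneous and `K` is positively homogeneous. -/
theorem stmt_14 {p : ℕ} (hp : 0 < p)
    (d : Fin p → ℕ) (hd : ∀ i, 0 < d i)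
    (M : ∀ i, (Fin (d i) → (Set.Ioi (0:ℝ))) → (Set.Ioi (0:ℝ)))
    (hstrict : ∀ i, IsStrictMeanOn (Set.Ioi (0:ℝ)) (M i)) (hcont : ∀ i, Continuous (M i))
    (α : ∀ i, Fin (d i) → Fin p)
    (herg : IsErgodic
      (fun a b : (Root (IncidenceE d α) : Set (Fin p)) => IncidenceE d α a b))
    (K : (Fin p → (Set.Ioi (0:ℝ))) → (Set.Ioi (0:ℝ))) (hK : IsMeanOn (Set.Ioi (0:ℝ)) K)
    (hKinv : ∀ x, K (MeanTypeMap d M α x) = K x)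
    (hKuniq : ∀ L : (Fin p → (Set.Ioi (0:ℝ))) → (Set.Ioi (0:ℝ)),
      IsMeanOn (Set.Ioi (0:ℝ)) L → (∀ x, L (MeanTypeMap d M α x) = L x) → L = K)
    (hhom : ∀ i, PosHomog (M i)) :
    (∀ (n : ℕ) (i : Fin p), PosHomog (fun x => ((MeanTypeMap d M α)^[n] x) i)) ∧
      PosHomog K := by
  classical
  have hcomm : ∀ (t : ℝ) (ht : 0 < t) (x : Fin p → (Set.Ioi (0:ℝ))),
      MeanTypeMap d M α (scl t ht x) = scl t ht (MeanTypeMap d M α x) := by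
    intro t ht x
    funext i
    apply Subtype.ext
    have := hhom i t ht (fun j => x (α i j))
    simpa [MeanTypeMap, scl] using this
  have hiter : ∀ (n : ℕ) (t : ℝ) (ht : 0 < t) (x : Fin p → (Set.Ioi (0:ℝ))),
      (MeanTypeMap d M α)^[n] (scl t ht x) = scl t ht ((MeanTypeMap d M α)^[n] x) := by
    intro n
    induction n with
    | zero => intro t ht x; simp
    | succ n ih =>
        intro t ht x
        rw [Function.iterate_succ_apply', Function.iterate_succ_apply', ih, hcomm]
  constructor
  · intro n i t ht x
    show (((MeanTypeMap d M α)^[n] (scl t ht x)) i : ℝ)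
        = t * (((MeanTypeMap d M α)^[n] x) i : ℝ)
    rw [hiter n t ht x]
    rfl
  · intro t ht x
    have hpos : ∀ y : Fin p → (Set.Ioi (0:ℝ)),
        (0:ℝ) < (K (scl t ht y) : ℝ) / t :=
      fun y => div_pos (Set.mem_Ioi.mp (K (scl t ht y)).2) ht
    set L : (Fin p → (Set.Ioi (0:ℝ))) → (Set.Ioi (0:ℝ)) :=
      fun y => ⟨(K (scl t ht y) : ℝ) / t, Set.mem_Ioi.mpr (hpos y)⟩ with hLdef
    have hLmean : IsMeanOn (Set.Ioi (0:ℝ)) L := by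
      intro y h
      obtain ⟨h1, h2⟩ := hK (scl t ht y) h
      have hinf : Finset.univ.inf' h (fun i => ((scl t ht y i : ℝ)))
          = t * Finset.univ.inf' h (fun i => ((y i : ℝ))) :=
        finset_inf'_mul h t ht _
      have hsup : Finset.univ.sup' h (fun i => ((scl t ht y i : ℝ)))
          = t * Finset.univ.sup' h (fun i => ((y i : ℝ))) :=
        finset_sup'_mul h t ht _
      rw [hinf] at h1
      rw [hsup] at h2
      constructor
      · show Finset.univ.inf' h (fun i => ((y i : ℝ))) ≤ (K (scl t ht y) : ℝ) / t
        rw [le_div_iff₀ ht, mul_comm]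
        exact h1
      · show (K (scl t ht y) : ℝ) / t ≤ Finset.univ.sup' h (fun i => ((y i : ℝ)))
        rw [div_le_iff₀ ht, mul_comm]
        exact h2
    have hLinv : ∀ y, L (MeanTypeMap d M α y) = L y := by
      intro y
      apply Subtype.ext
      show (K (scl t ht (MeanTypeMap d M α y)) : ℝ) / t = (K (scl t ht y) : ℝ) / t
      rw [← hcomm t ht y, hKinv]
    have hLK := hKuniq L hLmean hLinv
    have hx : (K (scl t ht x) : ℝ) / t = (K x : ℝ) := by
      have := congrFun hLK x
      exact congrArg Subtype.val this
    show (K (scl t ht x) : ℝ) = t * (K x : ℝ)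
    field_simp at hx
    linarith [hx]
end

section
/- Let I ⊆ ℝ be an interval with more than one point, p ∈ ℕ, d ∈ ℕᵖ, and α ∈ ℕ_p^d such that the root graph 𝓡(G_α) = (V₀,E₀) is periodic, i.e., there exist c ≥ 2 and a partition W₀,…,W_{c-1} of V₀ with E₀ ⊆ ⋃_{i=0}^{c-1} Wᵢ × W_{i+1 mod c}. Then for every d-averaging mapping 𝐌 = (M₁,…,M_p) on I with all Mᵢ continuous and strict, the 𝐌_α-invariant mean is not uniquely determined: there exist at least two distinct means K, L : Iᵖ → I with K ∘ 𝐌_α = K and L ∘ 𝐌_α = L. -/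
/-- Suppose the root graph `𝓡(G_α) = (V₀, E₀)` is periodic: there are `c ≥ 2` and a
partition `W₀,…,W_{c-1}` of `V₀` with `E₀ ⊆ ⋃ᵢ Wᵢ × W_{i+1 (mod c)}`. Then for every
`d`-averaging mapping `𝐌` on an interval `I` with more than one point, with all `Mᵢ`
continuous and strict, the `𝐌_α`-invariant mean is not uniquely determined: there are at
least two distinct `𝐌_α`-invariant means. -/
theorem stmt_17 {I : Set ℝ} (hI : I.OrdConnected)
    (hI2 : ∃ a b : ℝ, a ∈ I ∧ b ∈ I ∧ a ≠ b) {p : ℕ} (hp : 0 < p)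
    (d : Fin p → ℕ) (hd : ∀ i, 0 < d i)
    (α : ∀ i, Fin (d i) → Fin p)
    (c : ℕ) (hc : 2 ≤ c) (W : Fin c → Set (Fin p))
    (hWsub : ∀ k, W k ⊆ Root (IncidenceE d α))
    (hWne : ∀ k, (W k).Nonempty)
    (hWpart : ∀ v ∈ Root (IncidenceE d α), ∃! k, v ∈ W k)
    (hWedge : ∀ a b : Fin p, a ∈ Root (IncidenceE d α) → b ∈ Root (IncidenceE d α) →
      IncidenceE d α a b → ∀ k : Fin c, a ∈ W k → b ∈ W (k + ⟨1, by omega⟩)) :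
    ∀ M : ∀ i, (Fin (d i) → I) → I,
      (∀ i, IsStrictMeanOn I (M i)) → (∀ i, Continuous (M i)) →
        ∃ K L : (Fin p → I) → I, IsMeanOn I K ∧ IsMeanOn I L ∧
          (∀ x, K (MeanTypeMap d M α x) = K x) ∧
          (∀ x, L (MeanTypeMap d M α x) = L x) ∧ K ≠ L := by
  classical
  intro M hM _hMc
  haveI : NeZero c := ⟨by omega⟩
  have hpne : (Finset.univ : Finset (Fin p)).Nonempty := ⟨⟨0, hp⟩, Finset.mem_univ _⟩
  have hdne : ∀ i, (Finset.univ : Finset (Fin (d i))).Nonempty :=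
    fun i => ⟨⟨0, hd i⟩, Finset.mem_univ _⟩
  set T : (Fin p → I) → (Fin p → I) := MeanTypeMap d M α with hTdef
  set mn : (Fin p → I) → ℝ := fun x => Finset.univ.inf' hpne fun i => (x i : ℝ) with hmn
  set mx : (Fin p → I) → ℝ := fun x => Finset.univ.sup' hpne fun i => (x i : ℝ) with hmx
  have hcoord : ∀ (x : Fin p → I) i, mn x ≤ (T x i : ℝ) ∧ (T x i : ℝ) ≤ mx x := by
    intro x i
    have h1 := (hM i).1 (fun j => x (α i j)) (hdne i)
    constructor
    · refine le_trans ?_ h1.1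
      exact Finset.le_inf' _ _ fun j _ => Finset.inf'_le _ (Finset.mem_univ _)
    · refine le_trans h1.2 ?_
      exact Finset.sup'_le _ _ fun j _ => Finset.le_sup' (fun i => ((x i : ℝ))) (Finset.mem_univ _)
  have hmono : ∀ x : Fin p → I, mn x ≤ mn (T x) ∧ mx (T x) ≤ mx x := by
    intro x
    exact ⟨Finset.le_inf' _ _ fun i _ => (hcoord x i).1,
      Finset.sup'_le _ _ fun i _ => (hcoord x i).2⟩
  have hiter : ∀ (x : Fin p → I) (n : ℕ), mn x ≤ mn (T^[n] x) ∧ mx (T^[n] x) ≤ mx x := by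
    intro x n
    induction n with
    | zero => simp
    | succ n ih =>
      rw [Function.iterate_succ_apply']
      exact ⟨ih.1.trans (hmono _).1, (hmono _).2.trans ih.2⟩
  have hmm : ∀ x : Fin p → I, mn x ≤ mx x := by
    intro x
    exact le_trans (Finset.inf'_le _ (Finset.mem_univ (⟨0, hp⟩ : Fin p)))
      (Finset.le_sup' (fun i => ((x i : ℝ))) (Finset.mem_univ (⟨0, hp⟩ : Fin p)))
  have hbddA : ∀ x : Fin p → I, BddAbove (Set.range fun n => mn (T^[n] x)) := by
    intro x
    refine ⟨mx x, ?_⟩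
    rintro r ⟨n, rfl⟩
    exact (hmm _).trans (hiter x n).2
  have hbddB : ∀ x : Fin p → I, BddBelow (Set.range fun n => mx (T^[n] x)) := by
    intro x
    refine ⟨mn x, ?_⟩
    rintro r ⟨n, rfl⟩
    exact (hiter x n).1.trans (hmm _)
  have hmnI : ∀ x : Fin p → I, mn x ∈ I := by
    intro x
    obtain ⟨i, _, hi⟩ := Finset.exists_mem_eq_inf' hpne fun i => ((x i : ℝ))
    rw [hmn]
    simp only []
    rw [hi]
    exact (x i).2
  have hmxI : ∀ x : Fin p → I, mx x ∈ I := by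
    intro x
    obtain ⟨i, _, hi⟩ := Finset.exists_mem_eq_sup' hpne fun i => ((x i : ℝ))
    rw [hmx]
    simp only []
    rw [hi]
    exact (x i).2
  have hKlb : ∀ x : Fin p → I, mn x ≤ ⨆ n, mn (T^[n] x) := by
    intro x
    have := le_ciSup (hbddA x) 0
    simpa using this
  have hKub : ∀ x : Fin p → I, (⨆ n, mn (T^[n] x)) ≤ mx x :=
    fun x => ciSup_le fun n => (hmm _).trans (hiter x n).2
  have hLlb : ∀ x : Fin p → I, mn x ≤ ⨅ n, mx (T^[n] x) :=
    fun x => le_ciInf fun n => (hiter x n).1.trans (hmm _)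
  have hLub : ∀ x : Fin p → I, (⨅ n, mx (T^[n] x)) ≤ mx x := by
    intro x
    have := ciInf_le (hbddB x) 0
    simpa using this
  have hKmem : ∀ x : Fin p → I, (⨆ n, mn (T^[n] x)) ∈ I :=
    fun x => hI.out (hmnI x) (hmxI x) ⟨hKlb x, hKub x⟩
  have hLmem : ∀ x : Fin p → I, (⨅ n, mx (T^[n] x)) ∈ I :=
    fun x => hI.out (hmnI x) (hmxI x) ⟨hLlb x, hLub x⟩
  set K : (Fin p → I) → I := fun x => ⟨⨆ n, mn (T^[n] x), hKmem x⟩ with hKdef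
  set L : (Fin p → I) → I := fun x => ⟨⨅ n, mx (T^[n] x), hLmem x⟩ with hLdef
  have hKinv : ∀ x, K (T x) = K x := by
    intro x
    apply Subtype.ext
    show (⨆ n, mn (T^[n] (T x))) = ⨆ n, mn (T^[n] x)
    have hsh : ∀ n : ℕ, T^[n] (T x) = T^[n + 1] x :=
      fun n => (Function.iterate_succ_apply T n x).symm
    apply le_antisymm
    · exact ciSup_le fun n => by rw [hsh n]; exact le_ciSup (hbddA x) (n + 1)
    · refine ciSup_le fun n => ?_
      have h1 : mn (T^[n] x) ≤ mn (T^[n] (T x)) := by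
        rw [hsh n, Function.iterate_succ_apply']
        exact (hmono _).1
      exact h1.trans (le_ciSup (hbddA (T x)) n)
  have hLinv : ∀ x, L (T x) = L x := by
    intro x
    apply Subtype.ext
    show (⨅ n, mx (T^[n] (T x))) = ⨅ n, mx (T^[n] x)
    have hsh : ∀ n : ℕ, T^[n] (T x) = T^[n + 1] x :=
      fun n => (Function.iterate_succ_apply T n x).symm
    apply le_antisymm
    · refine le_ciInf fun n => ?_
      have h1 : mx (T^[n] (T x)) ≤ mx (T^[n] x) := by
        rw [hsh n, Function.iterate_succ_apply']
        exact (hmono _).2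
      exact (ciInf_le (hbddB (T x)) n).trans h1
    · exact le_ciInf fun n => by rw [hsh n]; exact ciInf_le (hbddB x) (n + 1)
  -- the distinguishing point
  obtain ⟨a, b, ha, hb, hlt⟩ : ∃ a b : ℝ, a ∈ I ∧ b ∈ I ∧ a < b := by
    obtain ⟨a, b, ha, hb, hne⟩ := hI2
    rcases hne.lt_or_gt with h | h
    exacts [⟨a, b, ha, hb, h⟩, ⟨b, a, hb, ha, h⟩]
  set e : Fin c := ⟨1, by omega⟩ with hedef
  have he0 : e ≠ 0 := by
    intro h
    have := congrArg Fin.val h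
    simp [hedef, Fin.val_zero] at this
  set g : ℕ → Fin c := fun n => n • e with hgdef
  have hg0 : g 0 = 0 := zero_nsmul e
  have hgsucc : ∀ n, g (n + 1) = g n + e := fun n => succ_nsmul e n
  set x : Fin p → I := fun v => if v ∈ W 0 then ⟨a, ha⟩ else ⟨b, hb⟩ with hxdef
  have hinE : ∀ v, v ∈ Root (IncidenceE d α) → ∀ w, IncidenceE d α w v →
      w ∈ Root (IncidenceE d α) := by
    intro v hv w hwv
    have hq : Quotient.mk (SCCSetoid (IncidenceE d α)) w
        = Quotient.mk (SCCSetoid (IncidenceE d α)) v := by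
      by_contra hne
      exact hv (Quotient.mk _ w) ⟨hne, w, v, rfl, rfl, hwv⟩
    intro P hP
    rw [hq] at hP
    exact hv P hP
  have hclass : ∀ (v : Fin p) (k : Fin c), v ∈ W k → ∀ w, IncidenceE d α w v →
      w ∈ W (k - e) := by
    intro v k hvk w hwv
    have hvR := hWsub k hvk
    have hwR := hinE v hvR w hwv
    obtain ⟨k', hk', _⟩ := hWpart w hwR
    have hv' : v ∈ W (k' + e) := hWedge w v hwR hvR hwv k' hk'
    obtain ⟨k'', hk''⟩ := hWpart v hvR
    have hke : k = k' + e := (hk''.2 k hvk).trans (hk''.2 (k' + e) hv').symm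
    have : k' = k - e := eq_sub_of_add_eq hke.symm
    exact this ▸ hk'
  have key : ∀ (n : ℕ) (v : Fin p) (k : Fin c), v ∈ W k →
      ((T^[n] x) v : ℝ) = if k = g n then (a : ℝ) else b := by
    intro n
    induction n with
    | zero =>
      intro v k hvk
      simp only [Function.iterate_zero, id, hg0]
      by_cases hk : k = 0
      · subst hk
        rw [if_pos rfl]
        simp [hxdef, hvk]
      · rw [if_neg hk]
        have hv0 : v ∉ W 0 := by
          intro h0
          obtain ⟨k'', hk''⟩ := hWpart v (hWsub k hvk)
          exact hk ((hk''.2 k hvk).trans (hk''.2 0 h0).symm)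
        simp [hxdef, hv0]
    | succ n ih =>
      intro v k hvk
      rw [Function.iterate_succ_apply']
      set y := T^[n] x with hydef
      have hval : ∀ j : Fin (d v), (y (α v j) : ℝ) = if (k - e) = g n then (a : ℝ) else b :=
        fun j => ih (α v j) (k - e) (hclass v k hvk (α v j) ⟨j, rfl⟩)
      set r : ℝ := if (k - e) = g n then (a : ℝ) else b with hrdef
      have hMv := (hM v).1 (fun j => y (α v j)) (hdne v)
      have hfr : (fun j : Fin (d v) => (y (α v j) : ℝ)) = fun _ => r := funext hval
      rw [hfr, Finset.inf'_const, Finset.sup'_const] at hMv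
      have hTyv : ((T y v : ℝ)) = r := le_antisymm hMv.2 hMv.1
      rw [hTyv, hrdef]
      have hiff : (k - e = g n) ↔ (k = g (n + 1)) := by
        rw [hgsucc n, sub_eq_iff_eq_add]
      exact if_congr hiff rfl rfl
  have hxa : ∀ v, (a : ℝ) ≤ (x v : ℝ) ∧ (x v : ℝ) ≤ b := by
    intro v
    by_cases h : v ∈ W 0 <;> simp [hxdef, h, hlt.le]
  have hmna : ∀ n, mn (T^[n] x) = a := by
    intro n
    apply le_antisymm
    · obtain ⟨v0, hv0⟩ := hWne (g n)
      have hv := key n v0 (g n) hv0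
      rw [if_pos rfl] at hv
      calc mn (T^[n] x) ≤ ((T^[n] x) v0 : ℝ) := Finset.inf'_le _ (Finset.mem_univ _)
        _ = a := hv
    · refine le_trans ?_ (hiter x n).1
      exact Finset.le_inf' _ _ fun v _ => (hxa v).1
  have hmxb : ∀ n, mx (T^[n] x) = b := by
    intro n
    apply le_antisymm
    · refine le_trans (hiter x n).2 ?_
      exact Finset.sup'_le _ _ fun v _ => (hxa v).2
    · obtain ⟨v1, hv1⟩ := hWne (g n + e)
      have hv := key n v1 (g n + e) hv1
      rw [if_neg (by simpa using he0 : ¬ g n + e = g n)] at hv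
      calc (b : ℝ) = ((T^[n] x) v1 : ℝ) := hv.symm
        _ ≤ mx (T^[n] x) := Finset.le_sup' (fun i => ((T^[n] x i : ℝ))) (Finset.mem_univ _)
  have hKx : (K x : ℝ) = a := by
    show (⨆ n, mn (T^[n] x)) = a
    rw [show (fun n : ℕ => mn (T^[n] x)) = fun _ => (a : ℝ) from funext hmna]
    exact ciSup_const
  have hLx : (L x : ℝ) = b := by
    show (⨅ n, mx (T^[n] x)) = b
    rw [show (fun n : ℕ => mx (T^[n] x)) = fun _ => (b : ℝ) from funext hmxb]
    exact ciInf_const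
  have hKmean : IsMeanOn I K := by
    intro z h
    exact ⟨hKlb z, (hKub z)⟩
  have hLmean : IsMeanOn I L := by
    intro z h
    exact ⟨hLlb z, hLub z⟩
  refine ⟨K, L, hKmean, hLmean, hKinv, hLinv, ?_⟩
  intro hKL
  have := congrArg Subtype.val (congrFun hKL x)
  rw [hKx, hLx] at this
  exact hlt.ne this
end

section
/- Let I = (0,+∞) and define 𝐌_α : I⁴ → I⁴ by 𝐌_α(x,y,z,t) = (2xy/(x+y), (x+y)/2, 2yt/(y+t), (z+t)/2). Then the function K_α : I⁴ → I given by K_α(x,y,z,t) = √(xy) is the unique 𝐌_α-invariant mean: K_α ∘ 𝐌_α = K_α, and every mean L : I⁴ → I with L ∘ 𝐌_α = L equals K_α; moreover, the iterates 𝐌_αⁿ converge pointwise on I⁴ to (K_α,K_α,K_α,K_α). -/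
open Set in
/-- The mean-type mapping
`𝐌_α(x,y,z,t) = (2xy/(x+y), (x+y)/2, 2yt/(y+t), (z+t)/2)` on `(0,+∞)⁴`. -/
noncomputable def Malpha (v : Fin 4 → (Set.Ioi (0:ℝ))) : Fin 4 → (Set.Ioi (0:ℝ)) :=
  have hx : (0:ℝ) < v 0 := Set.mem_Ioi.mp (v 0).2
  have hy : (0:ℝ) < v 1 := Set.mem_Ioi.mp (v 1).2
  have hz : (0:ℝ) < v 2 := Set.mem_Ioi.mp (v 2).2
  have ht : (0:ℝ) < v 3 := Set.mem_Ioi.mp (v 3).2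
  ![⟨2 * (v 0 : ℝ) * (v 1 : ℝ) / ((v 0 : ℝ) + (v 1 : ℝ)),
      Set.mem_Ioi.mpr (div_pos (mul_pos (mul_pos two_pos hx) hy) (add_pos hx hy))⟩,
    ⟨((v 0 : ℝ) + (v 1 : ℝ)) / 2,
      Set.mem_Ioi.mpr (div_pos (add_pos hx hy) two_pos)⟩,
    ⟨2 * (v 1 : ℝ) * (v 3 : ℝ) / ((v 1 : ℝ) + (v 3 : ℝ)),
      Set.mem_Ioi.mpr (div_pos (mul_pos (mul_pos two_pos hy) ht) (add_pos hy ht))⟩,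
    ⟨((v 2 : ℝ) + (v 3 : ℝ)) / 2,
      Set.mem_Ioi.mpr (div_pos (add_pos hz ht) two_pos)⟩]

/-- `K_α(x,y,z,t) = √(xy)` on `(0,+∞)⁴`. -/
noncomputable def Kalpha (v : Fin 4 → (Set.Ioi (0:ℝ))) : (Set.Ioi (0:ℝ)) :=
  ⟨Real.sqrt ((v 0 : ℝ) * (v 1 : ℝ)),
    Set.mem_Ioi.mpr (Real.sqrt_pos.mpr
      (mul_pos (Set.mem_Ioi.mp (v 0).2) (Set.mem_Ioi.mp (v 1).2)))⟩

open Set Filter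

/-- coordinates of the iterates, as reals -/
noncomputable def Xc (v : Fin 4 → Set.Ioi (0:ℝ)) (n : ℕ) (i : Fin 4) : ℝ :=
  ((Malpha^[n] v) i : ℝ)

noncomputable def gval (v : Fin 4 → Set.Ioi (0:ℝ)) : ℝ :=
  Real.sqrt ((v 0 : ℝ) * (v 1 : ℝ))

noncomputable def mlo (v : Fin 4 → Set.Ioi (0:ℝ)) : ℝ :=
  min (min (v 0 : ℝ) (v 1 : ℝ)) (min (v 2 : ℝ) (v 3 : ℝ))

noncomputable def Mhi (v : Fin 4 → Set.Ioi (0:ℝ)) : ℝ :=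
  max (max (v 0 : ℝ) (v 1 : ℝ)) (max (v 2 : ℝ) (v 3 : ℝ))

lemma Xc_pos (v : Fin 4 → Set.Ioi (0:ℝ)) (n : ℕ) (i : Fin 4) : 0 < Xc v n i :=
  Set.mem_Ioi.mp ((Malpha^[n] v) i).2

lemma Xc_succ0 (v : Fin 4 → Set.Ioi (0:ℝ)) (n : ℕ) :
    Xc v (n+1) 0 = 2 * Xc v n 0 * Xc v n 1 / (Xc v n 0 + Xc v n 1) := by
  unfold Xc; rw [Function.iterate_succ_apply']; rfl

lemma Xc_succ1 (v : Fin 4 → Set.Ioi (0:ℝ)) (n : ℕ) :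
    Xc v (n+1) 1 = (Xc v n 0 + Xc v n 1) / 2 := by
  unfold Xc; rw [Function.iterate_succ_apply']; rfl

lemma Xc_succ2 (v : Fin 4 → Set.Ioi (0:ℝ)) (n : ℕ) :
    Xc v (n+1) 2 = 2 * Xc v n 1 * Xc v n 3 / (Xc v n 1 + Xc v n 3) := by
  unfold Xc; rw [Function.iterate_succ_apply']; rfl

lemma Xc_succ3 (v : Fin 4 → Set.Ioi (0:ℝ)) (n : ℕ) :
    Xc v (n+1) 3 = (Xc v n 2 + Xc v n 3) / 2 := by
  unfold Xc; rw [Function.iterate_succ_apply']; rfl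

lemma mlo_pos (v : Fin 4 → Set.Ioi (0:ℝ)) : 0 < mlo v := by
  have := Xc_pos v 0
  unfold mlo
  simp only [lt_min_iff]
  exact ⟨⟨(v 0).2, (v 1).2⟩, ⟨(v 2).2, (v 3).2⟩⟩

lemma mlo_le_Mhi (v : Fin 4 → Set.Ioi (0:ℝ)) : mlo v ≤ Mhi v := by
  unfold mlo Mhi
  exact le_trans (min_le_left _ _) (le_trans (min_le_left _ _)
    (le_trans (le_max_left _ _) (le_max_left _ _)))

/-- invariant box -/
lemma Xc_box (v : Fin 4 → Set.Ioi (0:ℝ)) (n : ℕ) : ∀ (i : Fin 4),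
    mlo v ≤ Xc v n i ∧ Xc v n i ≤ Mhi v := by
  induction n with
  | zero =>
    intro i
    fin_cases i <;>
      simp only [Xc, Function.iterate_zero, id_eq, mlo, Mhi] <;>
      constructor <;>
      first
        | exact le_trans (min_le_left _ _) (min_le_left _ _)
        | exact le_trans (min_le_left _ _) (min_le_right _ _)
        | exact le_trans (min_le_right _ _) (min_le_left _ _)
        | exact le_trans (min_le_right _ _) (min_le_right _ _)
        | exact le_trans (le_max_left _ _) (le_max_left _ _)
        | exact le_trans (le_max_right _ _) (le_max_left _ _)
        | exact le_trans (le_max_left _ _) (le_max_right _ _)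
        | exact le_trans (le_max_right _ _) (le_max_right _ _)
  | succ n ih =>
    intro i
    have h0 := ih 0; have h1 := ih 1; have h2 := ih 2; have h3 := ih 3
    have p0 := Xc_pos v n 0; have p1 := Xc_pos v n 1
    have p2 := Xc_pos v n 2; have p3 := Xc_pos v n 3
    fin_cases i <;> simp only [Fin.isValue, Fin.zero_eta, Fin.mk_one, Fin.reduceFinMk]
    · rw [Xc_succ0]
      constructor
      · rw [le_div_iff₀ (by linarith)]; nlinarith
      · rw [div_le_iff₀ (by linarith)]; nlinarith
    · rw [Xc_succ1]; constructor <;> [rw [le_div_iff₀]; rw [div_le_iff₀]] <;> [skip; norm_num; skip; norm_num] <;> linarith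
    · rw [Xc_succ2]
      constructor
      · rw [le_div_iff₀ (by linarith)]; nlinarith
      · rw [div_le_iff₀ (by linarith)]; nlinarith
    · rw [Xc_succ3]; constructor <;> [rw [le_div_iff₀]; rw [div_le_iff₀]] <;> [skip; norm_num; skip; norm_num] <;> linarith

/-- product invariance -/
lemma Xc_prod (v : Fin 4 → Set.Ioi (0:ℝ)) (n : ℕ) :
    Xc v n 0 * Xc v n 1 = (v 0 : ℝ) * (v 1 : ℝ) := by
  induction n with
  | zero => rfl
  | succ n ih =>
    rw [Xc_succ0, Xc_succ1, ← ih]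
    have p0 := Xc_pos v n 0; have p1 := Xc_pos v n 1
    field_simp

lemma gval_sq (v : Fin 4 → Set.Ioi (0:ℝ)) : gval v ^ 2 = (v 0 : ℝ) * (v 1 : ℝ) :=
  Real.sq_sqrt (le_of_lt (mul_pos (Set.mem_Ioi.mp (v 0).2) (Set.mem_Ioi.mp (v 1).2)))

lemma gval_pos (v : Fin 4 → Set.Ioi (0:ℝ)) : 0 < gval v :=
  Real.sqrt_pos.mpr (mul_pos (Set.mem_Ioi.mp (v 0).2) (Set.mem_Ioi.mp (v 1).2))

lemma gval_box (v : Fin 4 → Set.Ioi (0:ℝ)) : mlo v ≤ gval v ∧ gval v ≤ Mhi v := by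
  have h0 := Xc_box v 0 0
  have h1 := Xc_box v 0 1
  have e0 : Xc v 0 0 = (v 0 : ℝ) := rfl
  have e1 : Xc v 0 1 = (v 1 : ℝ) := rfl
  rw [e0] at h0; rw [e1] at h1
  have hm := mlo_pos v
  have hg := gval_pos v
  have hsq := gval_sq v
  constructor
  · nlinarith [h0.1, h1.1]
  · nlinarith [h0.2, h1.2, mlo_le_Mhi v]

/-- for n ≥ 1, x ≤ y -/
lemma Xc_le (v : Fin 4 → Set.Ioi (0:ℝ)) (n : ℕ) : Xc v (n+1) 0 ≤ Xc v (n+1) 1 := by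
  rw [Xc_succ0, Xc_succ1]
  have p0 := Xc_pos v n 0; have p1 := Xc_pos v n 1
  rw [div_le_div_iff₀ (by linarith) (by norm_num)]
  nlinarith [sq_nonneg (Xc v n 0 - Xc v n 1)]

/-- for n ≥ 1, x ≤ g ≤ y -/
lemma Xc_sandwich (v : Fin 4 → Set.Ioi (0:ℝ)) (n : ℕ) :
    Xc v (n+1) 0 ≤ gval v ∧ gval v ≤ Xc v (n+1) 1 := by
  have hle := Xc_le v n
  have hprod := Xc_prod v (n+1)
  have p0 := Xc_pos v (n+1) 0; have p1 := Xc_pos v (n+1) 1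
  have hg := gval_pos v
  have hsq := gval_sq v
  rw [← hsq] at hprod
  constructor
  · nlinarith
  · nlinarith

/-- gap halving -/
lemma Xc_gap (v : Fin 4 → Set.Ioi (0:ℝ)) (n : ℕ) :
    Xc v (n+2) 1 - Xc v (n+2) 0 ≤ (Xc v (n+1) 1 - Xc v (n+1) 0) / 2 := by
  have hle := Xc_le v n
  have p0 := Xc_pos v (n+1) 0; have p1 := Xc_pos v (n+1) 1
  rw [Xc_succ0, Xc_succ1]
  have hx : Xc v (n+1) 0 ≤ 2 * Xc v (n+1) 0 * Xc v (n+1) 1 / (Xc v (n+1) 0 + Xc v (n+1) 1) := by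
    rw [le_div_iff₀ (by linarith)]
    nlinarith
  linarith

lemma Xc_gap_geom (v : Fin 4 → Set.Ioi (0:ℝ)) (k : ℕ) :
    Xc v (k+1) 1 - Xc v (k+1) 0 ≤ (Mhi v - mlo v) * (1/2)^k := by
  induction k with
  | zero =>
    simp only [pow_zero, mul_one]
    have h0 := Xc_box v 1 0
    have h1 := Xc_box v 1 1
    linarith [h0.1, h1.2]
  | succ k ih =>
    have := Xc_gap v k
    have h2 : ((1:ℝ)/2)^(k+1) = (1/2)^k * (1/2) := by ring
    rw [h2]
    linarith

/-- ε bounds: |x n - g| and |y n - g| ≤ D (1/2)^n with D = 2(M-m) -/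
lemma Xc_eps1 (v : Fin 4 → Set.Ioi (0:ℝ)) (n : ℕ) :
    |Xc v n 1 - gval v| ≤ 2 * (Mhi v - mlo v) * (1/2)^n := by
  cases n with
  | zero =>
    simp only [pow_zero, mul_one]
    have h1 := Xc_box v 0 1
    have hg := gval_box v
    rw [abs_le]
    constructor <;> linarith [h1.1, h1.2, hg.1, hg.2]
  | succ k =>
    have hs := Xc_sandwich v k
    have hgap := Xc_gap_geom v k
    have hx := (Xc_sandwich v k).1
    rw [abs_of_nonneg (by linarith [hs.2])]
    have h2 : (2:ℝ) * (Mhi v - mlo v) * (1/2)^(k+1) = (Mhi v - mlo v) * (1/2)^k := by ring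
    rw [h2]
    linarith

lemma Xc_eps0 (v : Fin 4 → Set.Ioi (0:ℝ)) (n : ℕ) :
    |Xc v n 0 - gval v| ≤ 2 * (Mhi v - mlo v) * (1/2)^n := by
  cases n with
  | zero =>
    simp only [pow_zero, mul_one]
    have h1 := Xc_box v 0 0
    have hg := gval_box v
    rw [abs_le]
    constructor <;> linarith [h1.1, h1.2, hg.1, hg.2]
  | succ k =>
    have hs := Xc_sandwich v k
    have hgap := Xc_gap_geom v k
    rw [abs_of_nonpos (by linarith [hs.1])]
    have h2 : (2:ℝ) * (Mhi v - mlo v) * (1/2)^(k+1) = (Mhi v - mlo v) * (1/2)^k := by ring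
    rw [h2]
    linarith [hs.2]

/-- harmonic step estimate for coordinate 2 -/
lemma Xc_est2 (v : Fin 4 → Set.Ioi (0:ℝ)) (n : ℕ) :
    |Xc v (n+1) 2 - gval v| ≤
      (Mhi v ^ 2 / (2 * mlo v ^ 2)) * |Xc v n 1 - gval v|
      + (Mhi v / (Mhi v + mlo v)) * |Xc v n 3 - gval v| := by
  set y := Xc v n 1 with hy
  set t := Xc v n 3 with ht
  set g := gval v with hgdef
  set m := mlo v with hmdef
  set M := Mhi v with hMdef
  have hm : 0 < m := mlo_pos v
  have hby := Xc_box v n 1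
  have hbt := Xc_box v n 3
  have hbg := gval_box v
  have hyp : 0 < y := Xc_pos v n 1
  have htp : 0 < t := Xc_pos v n 3
  have hgp : 0 < g := gval_pos v
  have key : 2*y*t/(y+t) - g
      = (2*t^2/((y+t)*(g+t))) * (y - g) + (g/(g+t)) * (t - g) := by
    field_simp
    ring
  have hc1 : 0 ≤ 2*t^2/((y+t)*(g+t)) := by positivity
  have hc2 : 0 ≤ g/(g+t) := by positivity
  have hMpos : 0 < M := lt_of_lt_of_le hm (mlo_le_Mhi v)
  have hC : 2*t^2/((y+t)*(g+t)) ≤ M^2/(2*m^2) := by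
    rw [div_le_div_iff₀ (by positivity) (by positivity)]
    have h4 : 4*m^2 ≤ (y+t)*(g+t) := by nlinarith [hby.1, hbt.1, hbg.1]
    nlinarith [mul_le_mul_of_nonneg_left h4 (sq_nonneg M),
      mul_self_le_mul_self htp.le hbt.2, sq_nonneg m, mul_pos hm hm]
  have hc : g/(g+t) ≤ M/(M+m) := by
    rw [div_le_div_iff₀ (by positivity) (by linarith)]
    nlinarith [hbt.1, hbg.2]
  rw [Xc_succ2, ← hy, ← ht, key]
  calc |(2*t^2/((y+t)*(g+t))) * (y - g) + (g/(g+t)) * (t - g)|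
      ≤ |(2*t^2/((y+t)*(g+t))) * (y - g)| + |(g/(g+t)) * (t - g)| := abs_add_le _ _
    _ = (2*t^2/((y+t)*(g+t))) * |y - g| + (g/(g+t)) * |t - g| := by
        rw [abs_mul, abs_mul, abs_of_nonneg hc1, abs_of_nonneg hc2]
    _ ≤ (M^2/(2*m^2)) * |y - g| + (M/(M+m)) * |t - g| :=
        add_le_add (mul_le_mul_of_nonneg_right hC (abs_nonneg _))
          (mul_le_mul_of_nonneg_right hc (abs_nonneg _))

lemma Xc_est3 (v : Fin 4 → Set.Ioi (0:ℝ)) (n : ℕ) :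
    |Xc v (n+1) 3 - gval v| ≤ (|Xc v n 2 - gval v| + |Xc v n 3 - gval v|) / 2 := by
  rw [Xc_succ3]
  have key : (Xc v n 2 + Xc v n 3)/2 - gval v
      = ((Xc v n 2 - gval v) + (Xc v n 3 - gval v))/2 := by ring
  rw [key, abs_div, abs_two]
  linarith [abs_add_le (Xc v n 2 - gval v) (Xc v n 3 - gval v)]

/-- the master exponential bound for coordinates 2 and 3 -/
lemma Xc_exp23 (v : Fin 4 → Set.Ioi (0:ℝ)) :
    ∃ A ρ : ℝ, 0 < ρ ∧ ρ < 1 ∧ ∀ n,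
      |Xc v n 2 - gval v| ≤ A * ρ^n ∧ |Xc v n 3 - gval v| ≤ A * ρ^n := by
  set m := mlo v with hmdef
  set M := Mhi v with hMdef
  have hm : 0 < m := mlo_pos v
  have hmM : m ≤ M := mlo_le_Mhi v
  have hMpos : 0 < M := lt_of_lt_of_le hm hmM
  set C : ℝ := M^2/(2*m^2) with hCdef
  set c : ℝ := M/(M+m) with hcdef
  set D : ℝ := 2*(M-m) with hDdef
  set E : ℝ := C*D with hEdef
  set c' : ℝ := (1+c)/2 with hc'def
  have hC0 : 0 ≤ C := by positivity
  have hD0 : 0 ≤ D := by rw [hDdef]; linarith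
  have hE0 : 0 ≤ E := mul_nonneg hC0 hD0
  have hc0 : 0 ≤ c := by positivity
  have hc1 : c < 1 := by rw [hcdef, div_lt_one (by linarith)]; linarith
  have hc'0 : 0 ≤ c' := by rw [hc'def]; linarith
  have hc'1 : c' < 1 := by rw [hc'def]; linarith
  have hcc' : c ≤ c' := by rw [hc'def]; linarith
  -- abbreviations
  set a : ℕ → ℝ := fun n => |Xc v n 2 - gval v| with hadef
  set b : ℕ → ℝ := fun n => |Xc v n 3 - gval v| with hbdef
  set e : ℕ → ℝ := fun n => max (a n) (b n) with hedef
  have ha0 : ∀ n, 0 ≤ a n := fun n => abs_nonneg _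
  have hb0 : ∀ n, 0 ≤ b n := fun n => abs_nonneg _
  have he0 : ∀ n, 0 ≤ e n := fun n => le_trans (ha0 n) (le_max_left _ _)
  have hae : ∀ n, a n ≤ e n := fun n => le_max_left _ _
  have hbe : ∀ n, b n ≤ e n := fun n => le_max_right _ _
  have hA : ∀ n, a (n+1) ≤ C * |Xc v n 1 - gval v| + c * b n := fun n => Xc_est2 v n
  have hB : ∀ n, b (n+1) ≤ (a n + b n)/2 := fun n => Xc_est3 v n
  have hεb : ∀ n, |Xc v n 1 - gval v| ≤ D * (1/2)^n := fun n => by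
    have := Xc_eps1 v n; rw [hDdef]; linarith [this]
  have hhalf : ∀ n:ℕ, (0:ℝ) ≤ (1/2)^n := fun n => by positivity
  -- two-step recursion
  have he2 : ∀ n, e (n+2) ≤ E * (1/2)^n + c' * e n := by
    intro n
    have hp : ((1:ℝ)/2)^(n+1) = (1/2)^n * (1/2) := pow_succ _ _
    have hcee : c * e n ≤ c' * e n := mul_le_mul_of_nonneg_right hcc' (he0 n)
    have h1 : a (n+2) ≤ E * (1/2)^n + c' * e n := by
      have hA1 := hA (n+1)
      have hε : C * |Xc v (n+1) 1 - gval v| ≤ C * (D * ((1/2)^n * (1/2))) := by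
        have := hεb (n+1); rw [hp] at this
        exact mul_le_mul_of_nonneg_left this hC0
      have hEeq : C * (D * ((1/2)^n * (1/2))) = (E * (1/2)^n) / 2 := by rw [hEdef]; ring
      have hEc : (E * (1/2)^n) / 2 ≤ E * (1/2)^n := by
        have : 0 ≤ E * (1/2)^n := mul_nonneg hE0 (hhalf n)
        linarith
      have hcb : c * b (n+1) ≤ c * e n := by
        have h := hB n
        have : b (n+1) ≤ e n := le_trans h (by linarith [hae n, hbe n])
        exact mul_le_mul_of_nonneg_left this hc0
      calc a (n+2) ≤ C * |Xc v (n+1) 1 - gval v| + c * b (n+1) := hA1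
        _ ≤ (E * (1/2)^n) / 2 + c * e n := by rw [← hEeq]; exact add_le_add hε hcb
        _ ≤ E * (1/2)^n + c' * e n := add_le_add hEc hcee
    have h2 : b (n+2) ≤ E * (1/2)^n + c' * e n := by
      have hb2 := hB (n+1)
      have ha1 : a (n+1) ≤ C * (D * (1/2)^n) + c * e n := by
        have := hA n
        have h1' : C * |Xc v n 1 - gval v| ≤ C * (D * (1/2)^n) :=
          mul_le_mul_of_nonneg_left (hεb n) hC0
        have h2' : c * b n ≤ c * e n := mul_le_mul_of_nonneg_left (hbe n) hc0
        linarith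
      have hb1 : b (n+1) ≤ e n := le_trans (hB n) (by linarith [hae n, hbe n])
      have hCD : C * (D * (1/2)^n) = E * (1/2)^n := by rw [hEdef]; ring
      have hE2 : 0 ≤ E * (1/2)^n := mul_nonneg hE0 (hhalf n)
      calc b (n+2) ≤ (a (n+1) + b (n+1)) / 2 := hb2
        _ ≤ (E * (1/2)^n + c * e n + e n) / 2 := by rw [← hCD]; linarith
        _ ≤ E * (1/2)^n + c' * e n := by
            rw [hc'def]
            have := mul_nonneg hc0 (he0 n)
            have := he0 n
            nlinarith [hcee]
      
    exact max_le h1 h2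
  -- geometric majorant
  set s : ℝ := max (1/2) c' with hsdef
  have hs0 : (0:ℝ) < s := lt_of_lt_of_le (by norm_num) (le_max_left _ _)
  have hs1 : s < 1 := max_lt (by norm_num) hc'1
  set ρ : ℝ := Real.sqrt ((1+s)/2) with hρdef
  have hρsq : ρ^2 = (1+s)/2 := Real.sq_sqrt (by linarith)
  have hρpos : 0 < ρ := Real.sqrt_pos.mpr (by linarith)
  have hρ1 : ρ < 1 := by nlinarith [hρsq, hs1, hρpos]
  have hsρ : s < ρ^2 := by rw [hρsq]; linarith
  have hc'ρ : c' < ρ^2 := lt_of_le_of_lt (le_max_right _ _) hsρ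
  have hhρ : (1/2:ℝ) ≤ ρ^2 := le_of_lt (lt_of_le_of_lt (le_max_left _ _) hsρ)
  set A : ℝ := max (max (e 0) (e 1 / ρ)) (E / (ρ^2 - c')) with hAdef
  have hA0 : 0 ≤ A := le_trans (he0 0) (le_trans (le_max_left _ _) (le_max_left _ _))
  have hAE : E + c' * A ≤ A * ρ^2 := by
    have h : E / (ρ^2 - c') ≤ A := le_max_right _ _
    have hd : (0:ℝ) < ρ^2 - c' := by linarith
    rw [div_le_iff₀ hd] at h
    nlinarith [h]
  have key : ∀ n, e n ≤ A * ρ^n ∧ e (n+1) ≤ A * ρ^(n+1) := by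
    intro n
    induction n with
    | zero =>
      constructor
      · have h0 : e 0 ≤ A := le_trans (le_max_left _ _) (le_max_left _ _)
        simpa using h0
      · have h1 : e 1 / ρ ≤ A := le_trans (le_max_right _ _) (le_max_left _ _)
        rw [div_le_iff₀ hρpos] at h1
        simpa [pow_one] using h1
    | succ k ih =>
      refine ⟨ih.2, ?_⟩
      have hrec := he2 k
      have hρk1 : ρ^k ≤ 1 := pow_le_one₀ hρpos.le hρ1.le
      have hρk0 : (0:ℝ) ≤ ρ^k := by positivity
      have hg1 : ((1:ℝ)/2)^k ≤ (ρ^2)^k := pow_le_pow_left₀ (by norm_num) hhρ k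
      have hg2 : ((ρ:ℝ)^2)^k ≤ ρ^k := by
        calc ((ρ:ℝ)^2)^k = ρ^k * ρ^k := by ring
          _ ≤ 1 * ρ^k := mul_le_mul_of_nonneg_right hρk1 hρk0
          _ = ρ^k := one_mul _
      have hstep : e (k+2) ≤ (E + c' * A) * ρ^k := by
        have h3 : E * (1/2)^k ≤ E * ρ^k :=
          mul_le_mul_of_nonneg_left (le_trans hg1 hg2) hE0
        have h4 : c' * e k ≤ c' * (A * ρ^k) := mul_le_mul_of_nonneg_left ih.1 hc'0
        calc e (k+2) ≤ E * (1/2)^k + c' * e k := hrec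
          _ ≤ E * ρ^k + c' * (A * ρ^k) := add_le_add h3 h4
          _ = (E + c' * A) * ρ^k := by ring
      calc e (k+2) ≤ (E + c' * A) * ρ^k := hstep
        _ ≤ (A * ρ^2) * ρ^k := mul_le_mul_of_nonneg_right hAE hρk0
        _ = A * ρ^(k+2) := by ring
  exact ⟨A, ρ, hρpos, hρ1, fun n =>
    ⟨le_trans (hae n) (key n).1, le_trans (hbe n) (key n).1⟩⟩

lemma geom_squeeze (f : ℕ → ℝ) (L B r : ℝ) (hr0 : 0 ≤ r) (hr1 : r < 1)
    (h : ∀ n, |f n - L| ≤ B * r^n) : Filter.Tendsto f Filter.atTop (nhds L) := by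
  have hg : Filter.Tendsto (fun n : ℕ => B * r^n) Filter.atTop (nhds 0) := by
    have := (tendsto_pow_atTop_nhds_zero_of_lt_one hr0 hr1).const_mul B
    simpa using this
  have h0 : Filter.Tendsto (fun n => f n - L) Filter.atTop (nhds 0) :=
    squeeze_zero_norm (fun n => by simpa using h n) hg
  have := h0.add (tendsto_const_nhds (x := L))
  simpa using this

lemma Xc_tendsto (v : Fin 4 → Set.Ioi (0:ℝ)) (i : Fin 4) :
    Filter.Tendsto (fun n => Xc v n i) Filter.atTop (nhds (gval v)) := by
  obtain ⟨A, ρ, hρ0, hρ1, hAb⟩ := Xc_exp23 v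
  fin_cases i <;> simp only [Fin.isValue, Fin.zero_eta, Fin.mk_one, Fin.reduceFinMk]
  · exact geom_squeeze _ _ _ _ (by norm_num) (by norm_num) (Xc_eps0 v)
  · exact geom_squeeze _ _ _ _ (by norm_num) (by norm_num) (Xc_eps1 v)
  · exact geom_squeeze _ _ _ _ hρ0.le hρ1 (fun n => (hAb n).1)
  · exact geom_squeeze _ _ _ _ hρ0.le hρ1 (fun n => (hAb n).2)

lemma inf4 (f : Fin 4 → ℝ) (h : (Finset.univ : Finset (Fin 4)).Nonempty) :
    Finset.univ.inf' h f = min (f 0) (min (f 1) (min (f 2) (f 3))) := by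
  show Finset.inf' {0,1,2,3} h f = _
  simp [Finset.inf'_insert]

lemma sup4 (f : Fin 4 → ℝ) (h : (Finset.univ : Finset (Fin 4)).Nonempty) :
    Finset.univ.sup' h f = max (f 0) (max (f 1) (max (f 2) (f 3))) := by
  show Finset.sup' {0,1,2,3} h f = _
  simp [Finset.sup'_insert]

/-- `K_α(x,y,z,t) = √(xy)` is the unique `𝐌_α`-invariant mean for
`𝐌_α(x,y,z,t) = (2xy/(x+y), (x+y)/2, 2yt/(y+t), (z+t)/2)` on `I = (0,+∞)`:
it is an invariant mean, every invariant mean equals it, and the iterates `𝐌_αⁿ`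
converge pointwise on `I⁴` to `(K_α, K_α, K_α, K_α)`. -/
theorem stmt_19 :
    IsMeanOn (Set.Ioi (0:ℝ)) Kalpha ∧
    (∀ v, Kalpha (Malpha v) = Kalpha v) ∧
    (∀ L : (Fin 4 → (Set.Ioi (0:ℝ))) → (Set.Ioi (0:ℝ)),
      IsMeanOn (Set.Ioi (0:ℝ)) L → (∀ v, L (Malpha v) = L v) → L = Kalpha) ∧
    (∀ (v : Fin 4 → (Set.Ioi (0:ℝ))) (i : Fin 4),
      Filter.Tendsto (fun n => ((Malpha^[n] v) i : ℝ)) Filter.atTop (nhds (Kalpha v))) := by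
  have hconv : ∀ (v : Fin 4 → (Set.Ioi (0:ℝ))) (i : Fin 4),
      Filter.Tendsto (fun n => ((Malpha^[n] v) i : ℝ)) Filter.atTop (nhds (Kalpha v)) := by
    intro v i
    exact Xc_tendsto v i
  have hmean : IsMeanOn (Set.Ioi (0:ℝ)) Kalpha := by
    intro x h
    have p0 : (0:ℝ) < x 0 := Set.mem_Ioi.mp (x 0).2
    have p1 : (0:ℝ) < x 1 := Set.mem_Ioi.mp (x 1).2
    have p2 : (0:ℝ) < x 2 := Set.mem_Ioi.mp (x 2).2
    have p3 : (0:ℝ) < x 3 := Set.mem_Ioi.mp (x 3).2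
    rw [inf4, sup4]
    have hK : (Kalpha x : ℝ) = Real.sqrt ((x 0 : ℝ) * (x 1 : ℝ)) := rfl
    rw [hK]
    set i4 := min ((x 0:ℝ)) (min ((x 1:ℝ)) (min ((x 2:ℝ)) ((x 3:ℝ)))) with hi4
    set s4 := max ((x 0:ℝ)) (max ((x 1:ℝ)) (max ((x 2:ℝ)) ((x 3:ℝ)))) with hs4
    have hi0 : i4 ≤ (x 0:ℝ) := min_le_left _ _
    have hi1 : i4 ≤ (x 1:ℝ) := le_trans (min_le_right _ _) (min_le_left _ _)
    have hs0 : (x 0:ℝ) ≤ s4 := le_max_left _ _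
    have hs1 : (x 1:ℝ) ≤ s4 := le_trans (le_max_left _ _) (le_max_right _ _)
    have hi4pos : 0 < i4 := by
      rw [hi4]; simp only [lt_min_iff]; exact ⟨p0, p1, p2, p3⟩
    have hs4pos : 0 < s4 := lt_of_lt_of_le p0 hs0
    constructor
    · have : i4 = Real.sqrt (i4^2) := (Real.sqrt_sq hi4pos.le).symm
      rw [this]
      apply Real.sqrt_le_sqrt
      nlinarith
    · have : s4 = Real.sqrt (s4^2) := (Real.sqrt_sq hs4pos.le).symm
      rw [this]
      apply Real.sqrt_le_sqrt
      nlinarith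
  refine ⟨hmean, ?_, ?_, hconv⟩
  · intro v
    have p0 : (0:ℝ) < v 0 := Set.mem_Ioi.mp (v 0).2
    have p1 : (0:ℝ) < v 1 := Set.mem_Ioi.mp (v 1).2
    apply Subtype.ext
    show Real.sqrt ((Malpha v 0 : ℝ) * (Malpha v 1 : ℝ)) = Real.sqrt ((v 0:ℝ) * (v 1:ℝ))
    have e0 : ((Malpha v 0 : ℝ)) = 2 * (v 0:ℝ) * (v 1:ℝ) / ((v 0:ℝ) + (v 1:ℝ)) := rfl
    have e1 : ((Malpha v 1 : ℝ)) = ((v 0:ℝ) + (v 1:ℝ)) / 2 := rfl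
    rw [e0, e1]
    congr 1
    field_simp
  · intro L hLmean hLinv
    funext v
    have hLn : ∀ n, L (Malpha^[n] v) = L v := by
      intro n
      induction n with
      | zero => rfl
      | succ k ih => rw [Function.iterate_succ_apply', hLinv, ih]
    have hne : (Finset.univ : Finset (Fin 4)).Nonempty := Finset.univ_nonempty
    have hbound : ∀ n, min (Xc v n 0) (min (Xc v n 1) (min (Xc v n 2) (Xc v n 3))) ≤ (L v : ℝ) ∧
        (L v : ℝ) ≤ max (Xc v n 0) (max (Xc v n 1) (max (Xc v n 2) (Xc v n 3))) := by
      intro n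
      have h := hLmean (Malpha^[n] v) hne
      rw [inf4, sup4, hLn n] at h
      exact h
    have hg := gval_pos v
    have htmin : Filter.Tendsto
        (fun n => min (Xc v n 0) (min (Xc v n 1) (min (Xc v n 2) (Xc v n 3))))
        Filter.atTop (nhds (gval v)) := by
      have := ((Xc_tendsto v 0).min ((Xc_tendsto v 1).min
        ((Xc_tendsto v 2).min (Xc_tendsto v 3))))
      simpa [min_self] using this
    have htmax : Filter.Tendsto
        (fun n => max (Xc v n 0) (max (Xc v n 1) (max (Xc v n 2) (Xc v n 3))))
        Filter.atTop (nhds (gval v)) := by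
      have := ((Xc_tendsto v 0).max ((Xc_tendsto v 1).max
        ((Xc_tendsto v 2).max (Xc_tendsto v 3))))
      simpa [max_self] using this
    have h1 : gval v ≤ (L v : ℝ) :=
      le_of_tendsto htmin (Filter.Eventually.of_forall fun n => (hbound n).1)
    have h2 : (L v : ℝ) ≤ gval v :=
      ge_of_tendsto htmax (Filter.Eventually.of_forall fun n => (hbound n).2)
    apply Subtype.ext
    show (L v : ℝ) = gval v
    linarith
end
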